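/- arXiv:1609.05853 — 8 statements merged into one kernel-verified Lean document; each statement's English description precedes it below -/
import Mathlib

section
/- Let u : ℝ → ℝ be a twice continuously differentiable function that is 1-periodic, i.e. u(h+1) = u(h) for all h ∈ ℝ. Then ∫₀¹ ((u³)''(h))² dh = 9 ∫₀¹ u(h)⁴ (u''(h))² dh, where (u³)'' denotes the second derivative of the function h ↦ u(h)³. -/
/-!
Expanding, `(u³)'' = 6uu'² + 3u²u''`, so `((u³)'')² - 9u⁴(u'')² = 36u²u'⁴ + 36u³u'²u''`, which is
`12 (u³u'³)'`. The derivative of a periodic function integrates to zero over a period.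
-/

open intervalIntegral Function

theorem Function.Periodic.deriv {𝕜 F : Type*} [NontriviallyNormedField 𝕜] [NormedAddCommGroup F]
    [NormedSpace 𝕜 F] {f : 𝕜 → F} {c : 𝕜} (hf : Periodic f c) : Periodic (deriv f) c := fun x => by
  rw [← deriv_comp_add_const, hf.funext]

theorem Function.Periodic.integral_deriv_eq_zero {E : Type*} [NormedAddCommGroup E]
    [NormedSpace ℝ E] [CompleteSpace E] {f f' : ℝ → E} {T : ℝ} (hf : Periodic f T)
    (hderiv : ∀ x, HasDerivAt f (f' x) x) (a : ℝ)
    (hint : IntervalIntegrable f' MeasureTheory.volume a (a + T)) :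
    ∫ x in a..a + T, f' x = 0 := by
  rw [integral_eq_sub_of_hasDerivAt (fun x _ => hderiv x) hint, hf a, sub_self]

theorem iteratedDeriv_two_eq_deriv_deriv {𝕜 F : Type*} [NontriviallyNormedField 𝕜]
    [NormedAddCommGroup F] [NormedSpace 𝕜 F] (f : 𝕜 → F) :
    iteratedDeriv 2 f = deriv (deriv f) := by
  rw [iteratedDeriv_succ, iteratedDeriv_one]

section CubeDerivatives

variable {𝕜 : Type*} [NontriviallyNormedField 𝕜] {u : 𝕜 → 𝕜}

theorem iteratedDeriv_two_cube (hu : Differentiable 𝕜 u) (hu' : Differentiable 𝕜 (deriv u)) :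
    iteratedDeriv 2 (fun x => u x ^ 3)
      = fun x => 6 * u x * deriv u x ^ 2 + 3 * u x ^ 2 * iteratedDeriv 2 u x := by
  have hcube : deriv (fun x => u x ^ 3) = fun x => 3 * u x ^ 2 * deriv u x := by
    funext x
    simpa using ((hu x).hasDerivAt.fun_pow 3).deriv
  rw [iteratedDeriv_two_eq_deriv_deriv, iteratedDeriv_two_eq_deriv_deriv, hcube]
  funext x
  rw [((((hu x).hasDerivAt.fun_pow 2).const_mul (3 : 𝕜)).fun_mul (hu' x).hasDerivAt).deriv]
  push_cast
  ring

theorem hasDerivAt_cube_mul_deriv_cube (hu : Differentiable 𝕜 u)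
    (hu' : Differentiable 𝕜 (deriv u)) (x : 𝕜) :
    HasDerivAt (fun x => u x ^ 3 * deriv u x ^ 3)
      (3 * u x ^ 2 * deriv u x ^ 4 + 3 * u x ^ 3 * deriv u x ^ 2 * iteratedDeriv 2 u x) x := by
  refine (((hu x).hasDerivAt.fun_pow 3).fun_mul ((hu' x).hasDerivAt.fun_pow 3)).congr_deriv ?_
  rw [iteratedDeriv_two_eq_deriv_deriv]
  push_cast
  ring

end CubeDerivatives

/-- For a 1-periodic `C²` function `u`, one has
`∫₀¹ ((u³)'')² = 9 ∫₀¹ u⁴ (u'')²`. -/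
theorem lemma_cube_second_derivative_identity
    (u : ℝ → ℝ) (hu : ContDiff ℝ 2 u)
    (hper : ∀ h : ℝ, u (h + 1) = u h) :
    ∫ h in (0:ℝ)..1, (iteratedDeriv 2 (fun x => (u x) ^ 3) h) ^ 2
      = 9 * ∫ h in (0:ℝ)..1, (u h) ^ 4 * (iteratedDeriv 2 u h) ^ 2 := by
  have hd : Differentiable ℝ u := hu.differentiable (by norm_num)
  have hd' : Differentiable ℝ (deriv u) := by
    simpa using hu.differentiable_iteratedDeriv 1 (by norm_num)
  have hc' : Continuous (deriv u) := hu.continuous_deriv (by norm_num)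
  have hc'' : Continuous (iteratedDeriv 2 u) := hu.continuous_iteratedDeriv 2 le_rfl
  set w : ℝ → ℝ :=
    fun x => 3 * u x ^ 2 * deriv u x ^ 4 + 3 * u x ^ 3 * deriv u x ^ 2 * iteratedDeriv 2 u x
  have hw : Continuous w := by fun_prop
  have hperiodic : Periodic (fun x => u x ^ 3 * deriv u x ^ 3) 1 := fun x => by
    simp only [hper x, (Periodic.deriv hper) x]
  have hw_zero : ∫ x in (0:ℝ)..1, w x = 0 := by
    simpa using hperiodic.integral_deriv_eq_zero (hasDerivAt_cube_mul_deriv_cube hd hd') 0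
      (hw.intervalIntegrable _ _)
  have hpointwise : ∀ x, iteratedDeriv 2 (fun x => u x ^ 3) x ^ 2
      = 9 * (u x ^ 4 * iteratedDeriv 2 u x ^ 2) + 12 * w x := fun x => by
    rw [iteratedDeriv_two_cube hd hd']
    ring
  simp_rw [hpointwise]
  have hcont : Continuous fun x => u x ^ 4 * iteratedDeriv 2 u x ^ 2 := by fun_prop
  rw [integral_add ((hcont.const_mul 9).intervalIntegrable _ _)
      ((hw.const_mul 12).intervalIntegrable _ _), integral_const_mul, integral_const_mul, hw_zero,
    mul_zero, add_zero]
end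

section
/- Let u : ℝ → ℝ be twice continuously differentiable on an open set containing [0,1], and suppose u attains its minimum over [0,1] at a point h⋆ ∈ [0,1], i.e. u(h⋆) ≤ u(h) for all h ∈ [0,1]. If moreover u'(h⋆) = 0, then for every h ∈ [0,1], u(h) − u(h⋆) ≤ (2/3) · (∫₀¹ (u''(s))² ds)^{1/2} · |h − h⋆|^{3/2}. -/
open intervalIntegral

/-! Since `u'(h⋆) = 0`, we have `u'(t) = ∫_{h⋆}^t u''`, so Cauchy–Schwarz gives
`|u'(t)| ≤ ‖u''‖₂ |t - h⋆|^{1/2}`. Integrating this bound from `h⋆` to `h` produces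
`(2/3) ‖u''‖₂ |h - h⋆|^{3/2}`. -/

open MeasureTheory Set
open scoped Interval

theorem sq_integral_le_measureReal_mul_integral_sq {α : Type*} [MeasurableSpace α]
    {μ : Measure α} [IsFiniteMeasure μ] {g : α → ℝ} (hg : Integrable g μ)
    (hg2 : Integrable (fun x => g x ^ 2) μ) :
    (∫ x, g x ∂μ) ^ 2 ≤ μ.real univ * ∫ x, g x ^ 2 ∂μ := by
  have hquad : ∀ t : ℝ,
      0 ≤ (∫ x, g x ^ 2 ∂μ) * (t * t) + (-2 * ∫ x, g x ∂μ) * t + μ.real univ := by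
    intro t
    calc 0 ≤ ∫ x, (t * g x - 1) ^ 2 ∂μ := integral_nonneg fun _ => sq_nonneg _
      _ = ∫ x, (t ^ 2 * g x ^ 2 - 2 * t * g x) + 1 ∂μ := by congr 1 with x; ring
      _ = _ := by
        have hg2' := hg2.const_mul (t ^ 2)
        have hg' := hg.const_mul (2 * t)
        rw [integral_add (by exact hg2'.sub hg') (integrable_const 1), integral_sub hg2' hg',
          MeasureTheory.integral_const_mul, MeasureTheory.integral_const_mul,
          MeasureTheory.integral_const, smul_eq_mul]
        ring
  have hdiscrim := discrim_le_zero hquad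
  rw [discrim] at hdiscrim
  linarith

theorem sq_intervalIntegral_le {g : ℝ → ℝ} {a b : ℝ} (hg : IntervalIntegrable g volume a b)
    (hg2 : IntervalIntegrable (fun x => g x ^ 2) volume a b) :
    (∫ x in a..b, g x) ^ 2 ≤ |b - a| * ∫ x in Ι a b, g x ^ 2 := by
  have : IsFiniteMeasure (volume.restrict (Ι a b)) := by
    rw [isFiniteMeasure_restrict, Real.volume_uIoc]; exact ENNReal.ofReal_ne_top
  rw [← sq_abs, abs_integral_eq_abs_integral_uIoc, sq_abs]
  convert sq_integral_le_measureReal_mul_integral_sq hg.def' hg2.def' using 2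
  simp [Measure.real, Real.volume_uIoc]

theorem setIntegral_uIoc_le_of_mem_uIcc {f : ℝ → ℝ} {a b c d : ℝ} (hf : ∀ x, 0 ≤ f x)
    (hfi : IntervalIntegrable f volume a b) (hc : c ∈ [[a, b]]) (hd : d ∈ [[a, b]]) :
    ∫ x in Ι c d, f x ≤ ∫ x in Ι a b, f x :=
  setIntegral_mono_set hfi.def' (ae_of_all _ fun x => hf x)
    (uIoc_subset_uIoc_of_uIcc_subset_uIcc (uIcc_subset_uIcc hc hd)).eventuallyLE

theorem integral_sqrt_abs_of_nonneg {d : ℝ} (hd : 0 ≤ d) :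
    ∫ x in (0 : ℝ)..d, √|x| = 2 / 3 * d ^ (3 / 2 : ℝ) := by
  have hsqrt : EqOn (fun x : ℝ => √|x|) (fun x => x ^ (1 / 2 : ℝ)) [[0, d]] := fun x hx => by
    rw [uIcc_of_le hd] at hx
    simp only [abs_of_nonneg hx.1, Real.sqrt_eq_rpow]
  rw [integral_congr hsqrt, integral_rpow (Or.inl (by norm_num)),
    Real.zero_rpow (by norm_num)]
  norm_num
  ring

theorem abs_integral_sqrt_abs (d : ℝ) :
    |(∫ x in (0 : ℝ)..d, √|x|)| = 2 / 3 * |d| ^ (3 / 2 : ℝ) := by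
  have hnonneg {e : ℝ} (he : 0 ≤ e) :
      |(∫ x in (0 : ℝ)..e, √|x|)| = 2 / 3 * |e| ^ (3 / 2 : ℝ) := by
    rw [integral_sqrt_abs_of_nonneg he, abs_of_nonneg he, abs_of_nonneg (by positivity)]
  rcases le_total 0 d with hd | hd
  · exact hnonneg hd
  · have hreflect : ∫ x in (0 : ℝ)..d, √|x| = -∫ x in (0 : ℝ)..-d, √|x| := by
      simpa [integral_symm (-d)] using integral_comp_neg (a := 0) (b := d) fun x => √|x|
    rw [hreflect, abs_neg, hnonneg (neg_nonneg.2 hd), abs_neg]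

theorem setIntegral_uIoc_sqrt_abs_sub (c h : ℝ) :
    ∫ t in Ι c h, √|t - c| = 2 / 3 * |h - c| ^ (3 / 2 : ℝ) := by
  rw [← abs_of_nonneg (setIntegral_nonneg measurableSet_uIoc fun t _ => Real.sqrt_nonneg _),
    ← abs_integral_eq_abs_integral_uIoc, integral_comp_sub_right (fun x => √|x|), sub_self,
    abs_integral_sqrt_abs]

theorem abs_sub_le_of_abs_deriv_le_mul_sqrt {f f' : ℝ → ℝ} {c h M : ℝ}
    (hf : ∀ x ∈ [[c, h]], HasDerivAt f (f' x) x) (hf' : IntervalIntegrable f' volume c h)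
    (hbound : ∀ t ∈ [[c, h]], |f' t| ≤ M * √|t - c|) :
    |f h - f c| ≤ 2 / 3 * M * |h - c| ^ (3 / 2 : ℝ) := by
  have hmajorant : IntegrableOn (fun t => M * √|t - c|) (Ι c h) :=
    Continuous.integrableOn_uIoc (by fun_prop)
  rw [← integral_eq_sub_of_hasDerivAt hf hf']
  calc ‖∫ t in c..h, f' t‖ ≤ ∫ t in Ι c h, ‖f' t‖ := norm_integral_le_integral_norm_uIoc
    _ ≤ ∫ t in Ι c h, M * √|t - c| :=
      setIntegral_mono_on hf'.def'.norm hmajorant measurableSet_uIoc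
        fun t ht => hbound t (uIoc_subset_uIcc ht)
    _ = 2 / 3 * M * |h - c| ^ (3 / 2 : ℝ) := by
      rw [MeasureTheory.integral_const_mul, setIntegral_uIoc_sqrt_abs_sub]
      ring

theorem abs_sub_le_of_hasDerivAt_of_deriv_eq_zero {u u' u'' : ℝ → ℝ} {a b c h : ℝ}
    (hu : ∀ x ∈ [[a, b]], HasDerivAt u (u' x) x) (hu' : ∀ x ∈ [[a, b]], HasDerivAt u' (u'' x) x)
    (hu'' : IntervalIntegrable u'' volume a b)
    (hu''2 : IntervalIntegrable (fun x => u'' x ^ 2) volume a b)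
    (hc : c ∈ [[a, b]]) (hcrit : u' c = 0) (hh : h ∈ [[a, b]]) :
    |u h - u c| ≤ 2 / 3 * √(∫ x in Ι a b, u'' x ^ 2) * |h - c| ^ (3 / 2 : ℝ) := by
  refine abs_sub_le_of_abs_deriv_le_mul_sqrt (fun x hx => hu x (uIcc_subset_uIcc hc hh hx))
    ((HasDerivAt.continuousOn hu').mono (uIcc_subset_uIcc hc hh)).intervalIntegrable fun t ht => ?_
  have ht : t ∈ [[a, b]] := uIcc_subset_uIcc hc hh ht
  have hsq : u' t ^ 2 ≤ |t - c| * ∫ x in Ι a b, u'' x ^ 2 := by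
    have hct : [[c, t]] ⊆ [[a, b]] := uIcc_subset_uIcc hc ht
    calc u' t ^ 2 = (∫ x in c..t, u'' x) ^ 2 := by
          rw [integral_eq_sub_of_hasDerivAt (fun x hx => hu' x (hct hx)) (hu''.mono_set hct),
            hcrit, sub_zero]
      _ ≤ |t - c| * ∫ x in Ι c t, u'' x ^ 2 :=
          sq_intervalIntegral_le (hu''.mono_set hct) (hu''2.mono_set hct)
      _ ≤ |t - c| * ∫ x in Ι a b, u'' x ^ 2 :=
          mul_le_mul_of_nonneg_left
            (setIntegral_uIoc_le_of_mem_uIcc (fun x => sq_nonneg _) hu''2 hc ht) (abs_nonneg _)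
  calc |u' t| ≤ √(|t - c| * ∫ x in Ι a b, u'' x ^ 2) := Real.abs_le_sqrt hsq
    _ = √(∫ x in Ι a b, u'' x ^ 2) * √|t - c| := by rw [Real.sqrt_mul (abs_nonneg _), mul_comm]

theorem lemma_min_point_holder_estimate_general
    (u : ℝ → ℝ) (s : Set ℝ) (hs : IsOpen s) (hsub : Set.Icc (0:ℝ) 1 ⊆ s)
    (hu : ContDiffOn ℝ 2 u s)
    (hstar : ℝ) (hmem : hstar ∈ Set.Icc (0:ℝ) 1)
    (hcrit : deriv u hstar = 0) :
    ∀ h ∈ Set.Icc (0:ℝ) 1,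
      u h - u hstar
        ≤ (2 / 3) * Real.sqrt (∫ x in (0:ℝ)..1, (iteratedDeriv 2 u x) ^ 2)
            * |h - hstar| ^ ((3:ℝ) / 2) := by
  intro h hh
  have hsecond : iteratedDeriv 2 u = deriv (deriv u) := by
    rw [iteratedDeriv_succ, iteratedDeriv_one]
  have hu' : ContDiffOn ℝ 1 (deriv u) s := hu.deriv_of_isOpen hs (by norm_num)
  have hu'' : ContinuousOn (deriv (deriv u)) s := hu'.continuousOn_deriv_of_isOpen hs le_rfl
  have hderiv {f : ℝ → ℝ} (hf : ContDiffOn ℝ 1 f s) : ∀ x ∈ s, HasDerivAt f (deriv f x) x :=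
    fun x hx => ((hf.differentiableOn one_ne_zero).differentiableAt (hs.mem_nhds hx)).hasDerivAt
  rw [← uIcc_of_le zero_le_one] at hsub hmem hh
  have hbound := abs_sub_le_of_hasDerivAt_of_deriv_eq_zero
    (fun x hx => hderiv (hu.of_le one_le_two) x (hsub hx)) (fun x hx => hderiv hu' x (hsub hx))
    (hu''.mono hsub).intervalIntegrable ((hu''.mono hsub).pow 2).intervalIntegrable hmem hcrit hh
  rw [uIoc_of_le zero_le_one, ← integral_of_le zero_le_one] at hbound
  rw [hsecond]
  exact (le_abs_self _).trans hbound

/-- Minimum-point Hölder-type estimate: if `u` is `C²` on an open set containing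
`[0,1]`, attains its minimum over `[0,1]` at `h⋆` with `u'(h⋆) = 0`, then
`u(h) − u(h⋆) ≤ (2/3)·‖u''‖_{L²([0,1])}·|h − h⋆|^{3/2}` for every `h ∈ [0,1]`. -/
theorem lemma_min_point_holder_estimate
    (u : ℝ → ℝ) (s : Set ℝ) (hs : IsOpen s) (hsub : Set.Icc (0:ℝ) 1 ⊆ s)
    (hu : ContDiffOn ℝ 2 u s)
    (hstar : ℝ) (hmem : hstar ∈ Set.Icc (0:ℝ) 1)
    (hmin : ∀ h ∈ Set.Icc (0:ℝ) 1, u hstar ≤ u h)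
    (hcrit : deriv u hstar = 0) :
    ∀ h ∈ Set.Icc (0:ℝ) 1,
      u h - u hstar
        ≤ (2 / 3) * Real.sqrt (∫ x in (0:ℝ)..1, (iteratedDeriv 2 u x) ^ 2)
            * |h - hstar| ^ ((3:ℝ) / 2) :=
  lemma_min_point_holder_estimate_general u s hs hsub hu hstar hmem hcrit
end

section
/- Let u : ℝ × ℝ → ℝ be a smooth (infinitely differentiable) function of (t,h), 1-periodic in h (u(t,h+1) = u(t,h) for all t,h), with u(t,h) > 0 everywhere, and satisfying the PDE ∂ₜu(t,h) = −u(t,h)² · ∂ₕ⁴(u(t,·)³)(h) for all t and h. Then for every t, the function F(t) = (1/2)∫₀¹ u(t,h)² dh has derivative F'(t) = −∫₀¹ (∂ₕ²(u(t,·)³)(h))² dh. In particular F(t) + 6∫₀ᵗ E(s) ds = F(0), where E(t) = (1/6)∫₀¹ (∂ₕ²(u(t,·)³)(h))² dh. -/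
open intervalIntegral

section Aux

open Function

private lemma hasDerivAt_snd_slice {v : ℝ → ℝ → ℝ} (hv : ContDiff ℝ (⊤ : ℕ∞) (uncurry v)) (t h : ℝ) :
    HasDerivAt (v t) (fderiv ℝ (uncurry v) (t, h) (0, 1)) h := by
  have h1 : HasFDerivAt (uncurry v) (fderiv ℝ (uncurry v) (t, h)) (t, h) :=
    (hv.differentiable (by simp) (t, h)).hasFDerivAt
  have h2 : HasDerivAt (fun x : ℝ => ((t, x) : ℝ × ℝ)) ((0 : ℝ), (1 : ℝ)) h :=
    HasDerivAt.prodMk (hasDerivAt_const h t) (hasDerivAt_id h)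
  exact h1.comp_hasDerivAt h h2

private lemma hasDerivAt_fst_slice {v : ℝ → ℝ → ℝ} (hv : ContDiff ℝ (⊤ : ℕ∞) (uncurry v)) (t h : ℝ) :
    HasDerivAt (fun s => v s h) (fderiv ℝ (uncurry v) (t, h) (1, 0)) t := by
  have h1 : HasFDerivAt (uncurry v) (fderiv ℝ (uncurry v) (t, h)) (t, h) :=
    (hv.differentiable (by simp) (t, h)).hasFDerivAt
  have h2 : HasDerivAt (fun s : ℝ => ((s, h) : ℝ × ℝ)) ((1 : ℝ), (0 : ℝ)) t :=
    HasDerivAt.prodMk (hasDerivAt_id t) (hasDerivAt_const t h)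
  exact h1.comp_hasDerivAt t h2

private lemma contDiff_pderiv {v : ℝ → ℝ → ℝ} (hv : ContDiff ℝ (⊤ : ℕ∞) (uncurry v)) :
    ContDiff ℝ (⊤ : ℕ∞) (uncurry fun t h => deriv (v t) h) := by
  have he : (uncurry fun t h => deriv (v t) h)
      = fun p : ℝ × ℝ => fderiv ℝ (uncurry v) p ((0 : ℝ), (1 : ℝ)) := by
    funext p
    exact (hasDerivAt_snd_slice hv p.1 p.2).deriv
  rw [he]
  exact (hv.fderiv_right (m := (⊤ : ℕ∞)) (by simp)).clm_apply contDiff_const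

private lemma contDiff_tderiv {v : ℝ → ℝ → ℝ} (hv : ContDiff ℝ (⊤ : ℕ∞) (uncurry v)) :
    ContDiff ℝ (⊤ : ℕ∞) (uncurry fun t h => deriv (fun s => v s h) t) := by
  have he : (uncurry fun t h => deriv (fun s => v s h) t)
      = fun p : ℝ × ℝ => fderiv ℝ (uncurry v) p ((1 : ℝ), (0 : ℝ)) := by
    funext p
    exact (hasDerivAt_fst_slice hv p.1 p.2).deriv
  rw [he]
  exact (hv.fderiv_right (m := (⊤ : ℕ∞)) (by simp)).clm_apply contDiff_const

private lemma pderiv_periodic {v : ℝ → ℝ → ℝ} (hp : ∀ t h, v t (h + 1) = v t h) (t h : ℝ) :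
    deriv (v t) (h + 1) = deriv (v t) h := by
  have he : (fun x => v t (x + 1)) = v t := funext fun x => hp t x
  rw [← deriv_comp_add_const (v t) 1 h, he]

private lemma cont_slice {v : ℝ → ℝ → ℝ} (hv : Continuous (Function.uncurry v)) (t : ℝ) :
    Continuous (v t) :=
  hv.comp (continuous_const.prodMk continuous_id)

private lemma hasDerivAt_pd {v : ℝ → ℝ → ℝ} (hv : ContDiff ℝ (⊤ : ℕ∞) (Function.uncurry v)) (t h : ℝ) :
    HasDerivAt (v t) (deriv (v t) h) h := by
  have hd := hasDerivAt_snd_slice hv t h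
  rwa [hd.deriv]

end Aux

/-- Along smooth positive 1-periodic solutions of `u_t = −u²(u³)_{hhhh}`, the step
free energy `F(t) = (1/2)∫₀¹ u(t,h)² dh` satisfies
`F'(t) = −∫₀¹ ((u³)_{hh})² dh`, and consequently `F(t) + 6∫₀ᵗ E(s) ds = F(0)`
where `E(t) = (1/6)∫₀¹ ((u³)_{hh})² dh`. -/
theorem free_energy_dissipation
    (u : ℝ → ℝ → ℝ)
    (hu : ContDiff ℝ (⊤ : ℕ∞) (Function.uncurry u))
    (hper : ∀ t h : ℝ, u t (h + 1) = u t h)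
    (hpos : ∀ t h : ℝ, 0 < u t h)
    (hpde : ∀ t h : ℝ, deriv (fun s => u s h) t
      = -(u t h) ^ 2 * iteratedDeriv 4 (fun x => (u t x) ^ 3) h) :
    (∀ t : ℝ,
      HasDerivAt (fun τ => (1 / 2) * ∫ h in (0:ℝ)..1, (u τ h) ^ 2)
        (-∫ h in (0:ℝ)..1, (iteratedDeriv 2 (fun x => (u t x) ^ 3) h) ^ 2) t)
    ∧ (∀ t : ℝ,
      (1 / 2) * (∫ h in (0:ℝ)..1, (u t h) ^ 2)
        + 6 * ∫ s in (0:ℝ)..t,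
            (1 / 6) * ∫ h in (0:ℝ)..1, (iteratedDeriv 2 (fun x => (u s x) ^ 3) h) ^ 2
      = (1 / 2) * ∫ h in (0:ℝ)..1, (u 0 h) ^ 2) := by
  set f0 : ℝ → ℝ → ℝ := fun t h => (u t h) ^ 3 with hf0
  set f1 : ℝ → ℝ → ℝ := fun t h => deriv (f0 t) h with hf1
  set f2 : ℝ → ℝ → ℝ := fun t h => deriv (f1 t) h with hf2
  set f3 : ℝ → ℝ → ℝ := fun t h => deriv (f2 t) h with hf3
  set f4 : ℝ → ℝ → ℝ := fun t h => deriv (f3 t) h with hf4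
  have hc0 : ContDiff ℝ (⊤ : ℕ∞) (Function.uncurry f0) := hu.pow 3
  have hc1 : ContDiff ℝ (⊤ : ℕ∞) (Function.uncurry f1) := contDiff_pderiv hc0
  have hc2 : ContDiff ℝ (⊤ : ℕ∞) (Function.uncurry f2) := contDiff_pderiv hc1
  have hc3 : ContDiff ℝ (⊤ : ℕ∞) (Function.uncurry f3) := contDiff_pderiv hc2
  have hc4 : ContDiff ℝ (⊤ : ℕ∞) (Function.uncurry f4) := contDiff_pderiv hc3
  have hp0 : ∀ t h, f0 t (h + 1) = f0 t h := fun t h => by simp only [hf0, hper t h]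
  have hp1 : ∀ t h, f1 t (h + 1) = f1 t h := fun t h => pderiv_periodic hp0 t h
  have hp2 : ∀ t h, f2 t (h + 1) = f2 t h := fun t h => pderiv_periodic hp1 t h
  have hp3 : ∀ t h, f3 t (h + 1) = f3 t h := fun t h => pderiv_periodic hp2 t h
  -- identification with iterated derivatives
  have hid2 : ∀ t, (fun h => iteratedDeriv 2 (fun x => (u t x) ^ 3) h) = f2 t := by
    intro t
    rw [show (2 : ℕ) = 0 + 1 + 1 by rfl, iteratedDeriv_succ, iteratedDeriv_succ,
      iteratedDeriv_zero]
  have hid4 : ∀ t h, iteratedDeriv 4 (fun x => (u t x) ^ 3) h = f4 t h := by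
    intro t h
    rw [show (4 : ℕ) = 0 + 1 + 1 + 1 + 1 by rfl, iteratedDeriv_succ, iteratedDeriv_succ,
      iteratedDeriv_succ, iteratedDeriv_succ, iteratedDeriv_zero]
  -- time derivative of the square of u
  set G : ℝ → ℝ → ℝ := fun x h => deriv (fun s => (u s h) ^ 2) x with hGdef
  have hGu : ContDiff ℝ (⊤ : ℕ∞) (Function.uncurry fun x h => (u x h) ^ 2) := hu.pow 2
  have hGc : Continuous (Function.uncurry G) := (contDiff_tderiv hGu).continuous
  have hGds : ∀ x h : ℝ, HasDerivAt (fun s => (u s h) ^ 2) (G x h) x := by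
    intro x h
    have hd := (hasDerivAt_fst_slice hGu x h)
    have he : G x h = fderiv ℝ (Function.uncurry fun x h => (u x h) ^ 2) (x, h) (1, 0) :=
      hd.deriv
    rw [he]; exact hd
  -- pointwise value of G via the PDE
  have hGval : ∀ t h : ℝ, G t h = (-2) * (f0 t h * f4 t h) := by
    intro t h
    have hd := hasDerivAt_fst_slice hu t h
    have h1 : G t h = 2 * u t h ^ 1 * deriv (fun s => u s h) t := by
      have h2 : deriv (fun s => u s h ^ 2) t = _ := (hd.pow 2).deriv
      have h3 := hd.deriv
      simp only [hGdef]
      rw [h2, h3]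
      norm_num
    rw [h1, hpde t h, hid4 t h]
    simp only [hf0]
    ring
  -- integration by parts: ∫ f0 f4 = ∫ f2²
  have hibp : ∀ t : ℝ, (∫ h in (0:ℝ)..1, f0 t h * f4 t h)
      = ∫ h in (0:ℝ)..1, (f2 t h) ^ 2 := by
    intro t
    have e1 : (∫ h in (0:ℝ)..1, f0 t h * f4 t h)
        = f0 t 1 * f3 t 1 - f0 t 0 * f3 t 0 - ∫ h in (0:ℝ)..1, f1 t h * f3 t h :=
      integral_mul_deriv_eq_deriv_mul
        (fun x _ => hasDerivAt_pd hc0 t x) (fun x _ => hasDerivAt_pd hc3 t x)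
        ((cont_slice hc1.continuous t).intervalIntegrable 0 1)
        ((cont_slice hc4.continuous t).intervalIntegrable 0 1)
    have e2 : (∫ h in (0:ℝ)..1, f1 t h * f3 t h)
        = f1 t 1 * f2 t 1 - f1 t 0 * f2 t 0 - ∫ h in (0:ℝ)..1, f2 t h * f2 t h :=
      integral_mul_deriv_eq_deriv_mul
        (fun x _ => hasDerivAt_pd hc1 t x) (fun x _ => hasDerivAt_pd hc2 t x)
        ((cont_slice hc2.continuous t).intervalIntegrable 0 1)
        ((cont_slice hc3.continuous t).intervalIntegrable 0 1)
    have b0 : f0 t 1 = f0 t 0 := by simpa using hp0 t 0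
    have b1 : f1 t 1 = f1 t 0 := by simpa using hp1 t 0
    have b2 : f2 t 1 = f2 t 0 := by simpa using hp2 t 0
    have b3 : f3 t 1 = f3 t 0 := by simpa using hp3 t 0
    have e3 : (∫ h in (0:ℝ)..1, f2 t h * f2 t h) = ∫ h in (0:ℝ)..1, (f2 t h) ^ 2 :=
      integral_congr fun x _ => by ring
    rw [e1, e2, b0, b1, b2, b3, e3]
    ring
  -- differentiation under the integral sign
  have key : ∀ t : ℝ, HasDerivAt (fun x => ∫ h in (0:ℝ)..1, (u x h) ^ 2)
      (∫ h in (0:ℝ)..1, G t h) t := by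
    intro t
    have hK : IsCompact ((Set.Icc (t - 1) (t + 1)) ×ˢ (Set.Icc (0:ℝ) 1)) :=
      isCompact_Icc.prod isCompact_Icc
    obtain ⟨C, hC⟩ := hK.exists_bound_of_continuousOn hGc.continuousOn
    have hmain := intervalIntegral.hasDerivAt_integral_of_dominated_loc_of_deriv_le
      (μ := MeasureTheory.volume) (F := fun x h => (u x h) ^ 2) (F' := G) (x₀ := t)
      (a := 0) (b := 1) (bound := fun _ => C) (s := Metric.ball t 1) (Metric.ball_mem_nhds t one_pos)
      (Filter.Eventually.of_forall fun x =>
        ((cont_slice hGu.continuous x)).aestronglyMeasurable.restrict)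
      ((cont_slice hGu.continuous t).intervalIntegrable 0 1)
      ((cont_slice hGc t)).aestronglyMeasurable.restrict
      ?_ (intervalIntegrable_const) ?_
    · exact hmain.2
    · refine MeasureTheory.ae_of_all _ fun h hh x hx => ?_
      rw [Set.uIoc_of_le (by norm_num : (0:ℝ) ≤ 1)] at hh
      have hx' : |x - t| < 1 := by
        simpa [Real.dist_eq] using Metric.mem_ball.mp hx
      have := hC (x, h) ⟨⟨by cases abs_lt.mp hx' with
        | intro a b => linarith, by cases abs_lt.mp hx' with
        | intro a b => linarith⟩, ⟨hh.1.le, hh.2⟩⟩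
      simpa using this
    · exact MeasureTheory.ae_of_all _ fun h _ x _ => hGds x h
  -- value of the integral of G
  have hGint : ∀ t : ℝ, (∫ h in (0:ℝ)..1, G t h)
      = (-2) * ∫ h in (0:ℝ)..1, (f2 t h) ^ 2 := by
    intro t
    have e1 : (∫ h in (0:ℝ)..1, G t h)
        = ∫ h in (0:ℝ)..1, (-2) * (f0 t h * f4 t h) :=
      integral_congr fun x _ => hGval t x
    rw [e1, intervalIntegral.integral_const_mul, hibp t]
  -- part 1 in terms of f2
  have part1 : ∀ t : ℝ, HasDerivAt (fun τ => (1 / 2) * ∫ h in (0:ℝ)..1, (u τ h) ^ 2)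
      (-∫ h in (0:ℝ)..1, (f2 t h) ^ 2) t := by
    intro t
    have hd := (key t).const_mul (1 / 2 : ℝ)
    have : (1 / 2 : ℝ) * ∫ h in (0:ℝ)..1, G t h = -∫ h in (0:ℝ)..1, (f2 t h) ^ 2 := by
      rw [hGint t]; ring
    rwa [this] at hd
  constructor
  · intro t
    have h2 : (∫ h in (0:ℝ)..1, (iteratedDeriv 2 (fun x => (u t x) ^ 3) h) ^ 2)
        = ∫ h in (0:ℝ)..1, (f2 t h) ^ 2 := by
      rw [← hid2 t]
    rw [h2]
    exact part1 t
  · intro t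
    have hcontI : Continuous fun s => ∫ h in (0:ℝ)..1, (f2 s h) ^ 2 :=
      intervalIntegral.continuous_parametric_intervalIntegral_of_continuous'
        (f := fun s h => (f2 s h) ^ 2) (hc2.continuous.pow 2 |>.congr fun _ => rfl) 0 1
    have hFTC : (∫ s in (0:ℝ)..t, -(∫ h in (0:ℝ)..1, (f2 s h) ^ 2))
        = (1 / 2) * (∫ h in (0:ℝ)..1, (u t h) ^ 2)
          - (1 / 2) * ∫ h in (0:ℝ)..1, (u 0 h) ^ 2 :=
      intervalIntegral.integral_eq_sub_of_hasDerivAt (fun x _ => part1 x)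
        (hcontI.neg.intervalIntegrable 0 t)
    have hre : ∀ s : ℝ, (1 / 6 : ℝ) * ∫ h in (0:ℝ)..1,
        (iteratedDeriv 2 (fun x => (u s x) ^ 3) h) ^ 2
        = (1 / 6 : ℝ) * ∫ h in (0:ℝ)..1, (f2 s h) ^ 2 := by
      intro s; rw [← hid2 s]
    rw [intervalIntegral.integral_congr (g := fun s => (1 / 6 : ℝ) *
        ∫ h in (0:ℝ)..1, (f2 s h) ^ 2) (fun s _ => hre s)]
    rw [intervalIntegral.integral_const_mul]
    rw [intervalIntegral.integral_neg] at hFTC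
    set X := ∫ s in (0:ℝ)..t, ∫ h in (0:ℝ)..1, (f2 s h) ^ 2
    linarith
end

section
/- Let u : ℝ × ℝ → ℝ be a smooth (infinitely differentiable) function of (t,h), 1-periodic in h (u(t,h+1) = u(t,h) for all t,h), with u(t,h) > 0 everywhere, and satisfying the PDE ∂ₜu(t,h) = −u(t,h)² · ∂ₕ⁴(u(t,·)³)(h) for all t and h. Then for every t, the function E(t) = (1/6)∫₀¹ (∂ₕ²(u(t,·)³)(h))² dh has derivative E'(t) = −∫₀¹ (∂ₜu(t,h))² dh ≤ 0; in particular t ↦ E(t) is non-increasing. -/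
open intervalIntegral MeasureTheory Set Function
open scoped ContDiff

noncomputable section EnergyAux

/-- Partial derivative in the second (space) variable. -/
def pdh (g : ℝ → ℝ → ℝ) : ℝ → ℝ → ℝ := fun t h => deriv (g t) h

/-- Partial derivative in the first (time) variable. -/
def pdt (g : ℝ → ℝ → ℝ) : ℝ → ℝ → ℝ := fun t h => deriv (fun s => g s h) t

variable {F : Type*} [NormedAddCommGroup F] [NormedSpace ℝ F]

lemma hasDerivAt_slice2 {g : ℝ × ℝ → F} (hg : Differentiable ℝ g) (t h : ℝ) :
    HasDerivAt (fun x => g (t, x)) (fderiv ℝ g (t, h) (0, 1)) h := by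
  have h1 : HasDerivAt (fun x : ℝ => ((t, x) : ℝ × ℝ)) ((0 : ℝ), (1 : ℝ)) h :=
    (hasDerivAt_const h t).prodMk (hasDerivAt_id h)
  exact (hg (t, h)).hasFDerivAt.comp_hasDerivAt h h1

lemma hasDerivAt_slice1 {g : ℝ × ℝ → F} (hg : Differentiable ℝ g) (t h : ℝ) :
    HasDerivAt (fun s => g (s, h)) (fderiv ℝ g (t, h) (1, 0)) t := by
  have h1 : HasDerivAt (fun s : ℝ => ((s, h) : ℝ × ℝ)) ((1 : ℝ), (0 : ℝ)) t :=
    (hasDerivAt_id t).prodMk (hasDerivAt_const t h)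
  exact (hg (t, h)).hasFDerivAt.comp_hasDerivAt t h1

lemma hasDerivAt_pdh {g : ℝ → ℝ → ℝ} (hg : ContDiff ℝ ∞ ↿g) (t h : ℝ) :
    HasDerivAt (g t) (pdh g t h) h := by
  have h1 := hasDerivAt_slice2 (hg.differentiable (by simp)) t h
  have h2 : pdh g t h = fderiv ℝ ↿g (t, h) (0, 1) := h1.deriv
  rw [h2]; exact h1

lemma hasDerivAt_pdt {g : ℝ → ℝ → ℝ} (hg : ContDiff ℝ ∞ ↿g) (t h : ℝ) :
    HasDerivAt (fun s => g s h) (pdt g t h) t := by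
  have h1 := hasDerivAt_slice1 (hg.differentiable (by simp)) t h
  have h2 : pdt g t h = fderiv ℝ ↿g (t, h) (1, 0) := h1.deriv
  rw [h2]; exact h1

lemma contDiff_pdh {g : ℝ → ℝ → ℝ} (hg : ContDiff ℝ ∞ ↿g) : ContDiff ℝ ∞ ↿(pdh g) := by
  have h2 : ↿(pdh g) = fun p : ℝ × ℝ => fderiv ℝ ↿g p (0, 1) := by
    funext p
    exact (hasDerivAt_slice2 (hg.differentiable (by simp)) p.1 p.2).deriv
  rw [h2]
  exact ContDiff.fderiv_apply (f := fun (_ : ℝ × ℝ) (q : ℝ × ℝ) => Function.uncurry g q) (g := id)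
    (hg.comp contDiff_snd) contDiff_id contDiff_const (by exact_mod_cast le_top)

lemma contDiff_pdt {g : ℝ → ℝ → ℝ} (hg : ContDiff ℝ ∞ ↿g) : ContDiff ℝ ∞ ↿(pdt g) := by
  have h2 : ↿(pdt g) = fun p : ℝ × ℝ => fderiv ℝ ↿g p (1, 0) := by
    funext p
    exact (hasDerivAt_slice1 (hg.differentiable (by simp)) p.1 p.2).deriv
  rw [h2]
  exact ContDiff.fderiv_apply (f := fun (_ : ℝ × ℝ) (q : ℝ × ℝ) => Function.uncurry g q) (g := id)
    (hg.comp contDiff_snd) contDiff_id contDiff_const (by exact_mod_cast le_top)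

lemma clairaut {g : ℝ → ℝ → ℝ} (hg : ContDiff ℝ ∞ ↿g) : pdt (pdh g) = pdh (pdt g) := by
  funext t h
  have hdiff : Differentiable ℝ ↿g := hg.differentiable (by simp)
  have hf' : ContDiff ℝ ∞ (fderiv ℝ ↿g) := hg.fderiv_right (by exact_mod_cast le_top)
  have hf'd : Differentiable ℝ (fderiv ℝ ↿g) := hf'.differentiable (by simp)
  have hsymm : IsSymmSndFDerivAt ℝ ↿g (t, h) :=
    (hg.contDiffAt).isSymmSndFDerivAt (by simp only [minSmoothness_of_isRCLikeNormedField]; exact WithTop.coe_le_coe.mpr le_top)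
  -- left side
  have L : pdt (pdh g) t h = (fderiv ℝ (fderiv ℝ ↿g) (t, h) (1, 0)) (0, 1) := by
    have e1 : (fun s => pdh g s h) = fun s => fderiv ℝ ↿g (s, h) (0, 1) := by
      funext s; exact (hasDerivAt_slice2 hdiff s h).deriv
    have h1 : HasDerivAt (fun s : ℝ => fderiv ℝ ↿g (s, h))
        (fderiv ℝ (fderiv ℝ ↿g) (t, h) (1, 0)) t := hasDerivAt_slice1 hf'd t h
    have h2 := h1.clm_apply (hasDerivAt_const t ((0 : ℝ), (1 : ℝ)))
    simp only [map_zero, add_zero] at h2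
    show deriv (fun s => pdh g s h) t = _
    rw [e1]; exact h2.deriv
  have R : pdh (pdt g) t h = (fderiv ℝ (fderiv ℝ ↿g) (t, h) (0, 1)) (1, 0) := by
    have e1 : (fun x => pdt g t x) = fun x => fderiv ℝ ↿g (t, x) (1, 0) := by
      funext x; exact (hasDerivAt_slice1 hdiff t x).deriv
    have h1 : HasDerivAt (fun x : ℝ => fderiv ℝ ↿g (t, x))
        (fderiv ℝ (fderiv ℝ ↿g) (t, h) (0, 1)) h := hasDerivAt_slice2 hf'd t h
    have h2 := h1.clm_apply (hasDerivAt_const h ((1 : ℝ), (0 : ℝ)))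
    simp only [map_zero, add_zero] at h2
    show deriv (fun x => pdt g t x) h = _
    rw [e1]; exact h2.deriv
  rw [L, R, hsymm.eq]

end EnergyAux

lemma contSlice {g : ℝ → ℝ → ℝ} (hg : ContDiff ℝ ∞ ↿g) (t : ℝ) : Continuous (g t) :=
  hg.continuous.comp (continuous_const.prodMk continuous_id)

lemma periodic_pdh {g : ℝ → ℝ → ℝ} (hp : ∀ t, Function.Periodic (g t) 1) (t : ℝ) :
    Function.Periodic (pdh g t) 1 := by
  intro x
  have h1 : (fun y => g t (y + 1)) = g t := funext fun y => hp t y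
  show deriv (g t) (x + 1) = deriv (g t) x
  rw [← deriv_comp_add_const (f := g t) (a := 1), h1]

lemma periodic_pdt {g : ℝ → ℝ → ℝ} (hp : ∀ t, Function.Periodic (g t) 1) (t : ℝ) :
    Function.Periodic (pdt g t) 1 := by
  intro x
  show deriv (fun s => g s (x + 1)) t = deriv (fun s => g s x) t
  congr 1
  exact funext fun s => hp s x

lemma hasDerivAt_intervalIntegral {f : ℝ → ℝ → ℝ} (hf : ContDiff ℝ ∞ ↿f) (t : ℝ) :
    HasDerivAt (fun τ => ∫ h in (0:ℝ)..1, f τ h) (∫ h in (0:ℝ)..1, pdt f t h) t := by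
  obtain ⟨C, hC⟩ := ((isCompact_closedBall t 1).prod (isCompact_Icc (a := (0:ℝ)) (b := 1))).exists_bound_of_continuousOn
    ((contDiff_pdt hf).continuous.continuousOn)
  refine (intervalIntegral.hasDerivAt_integral_of_dominated_loc_of_deriv_le
    (F := f) (F' := pdt f) (bound := fun _ => C) (Metric.ball_mem_nhds t zero_lt_one)
    (Filter.Eventually.of_forall fun x => (contSlice hf x).aestronglyMeasurable)
    ((contSlice hf t).intervalIntegrable 0 1)
    ((contSlice (contDiff_pdt hf) t).aestronglyMeasurable
    ) ?_ intervalIntegrable_const ?_).2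
  · refine Filter.Eventually.of_forall fun h hh x hx => hC (x, h) ?_
    have hh' : h ∈ Set.Icc (0:ℝ) 1 := by
      have h2 : h ∈ Set.Ioc (0:ℝ) 1 := by rwa [Set.uIoc_of_le (zero_le_one (α := ℝ))] at hh
      exact Set.Ioc_subset_Icc_self h2
    exact ⟨Metric.ball_subset_closedBall hx, hh'⟩
  · exact Filter.Eventually.of_forall fun h _ x _ => hasDerivAt_pdt hf x h



/-- Along smooth positive 1-periodic solutions of `u_t = −u²(u³)_{hhhh}`, the energy
dissipation rate `E(t) = (1/6)∫₀¹ ((u³)_{hh})² dh` satisfies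
`E'(t) = −∫₀¹ (u_t)² dh ≤ 0`; in particular `E` is non-increasing. -/
theorem energy_dissipation_rate_decreasing
    (u : ℝ → ℝ → ℝ)
    (hu : ContDiff ℝ (⊤ : ℕ∞) (Function.uncurry u))
    (hper : ∀ t h : ℝ, u t (h + 1) = u t h)
    (hpos : ∀ t h : ℝ, 0 < u t h)
    (hpde : ∀ t h : ℝ, deriv (fun s => u s h) t
      = -(u t h) ^ 2 * iteratedDeriv 4 (fun x => (u t x) ^ 3) h) :
    (∀ t : ℝ,
      HasDerivAt (fun τ => (1 / 6) * ∫ h in (0:ℝ)..1, (iteratedDeriv 2 (fun x => (u τ x) ^ 3) h) ^ 2)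
        (-∫ h in (0:ℝ)..1, (deriv (fun s => u s h) t) ^ 2) t
      ∧ (-∫ h in (0:ℝ)..1, (deriv (fun s => u s h) t) ^ 2) ≤ 0)
    ∧ Antitone (fun t => (1 / 6) * ∫ h in (0:ℝ)..1, (iteratedDeriv 2 (fun x => (u t x) ^ 3) h) ^ 2) := by
  have hu' : ContDiff ℝ ∞ ↿u := hu.of_le (by simp)
  set v : ℝ → ℝ → ℝ := fun t h => (u t h) ^ 3 with hvdef
  have hv : ContDiff ℝ ∞ ↿v := hu'.pow 3
  set v1 := pdh v; set v2 := pdh v1; set v3 := pdh v2; set v4 := pdh v3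
  set w := pdt v; set w1 := pdh w; set w2 := pdh w1
  set ut := pdt u
  have hv1 : ContDiff ℝ ∞ ↿v1 := contDiff_pdh hv
  have hv2 : ContDiff ℝ ∞ ↿v2 := contDiff_pdh hv1
  have hv3 : ContDiff ℝ ∞ ↿v3 := contDiff_pdh hv2
  have hv4 : ContDiff ℝ ∞ ↿v4 := contDiff_pdh hv3
  have hw : ContDiff ℝ ∞ ↿w := contDiff_pdt hv
  have hw1 : ContDiff ℝ ∞ ↿w1 := contDiff_pdh hw
  have hw2 : ContDiff ℝ ∞ ↿w2 := contDiff_pdh hw1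
  -- Clairaut: pdt v2 = w2
  have hcomm : pdt v2 = w2 := by
    calc pdt (pdh v1) = pdh (pdt v1) := clairaut hv1
    _ = pdh (pdh (pdt v)) := by rw [show pdt v1 = pdh (pdt v) from clairaut hv]
  -- iterated derivative identifications
  have e2 : ∀ t h : ℝ, iteratedDeriv 2 (fun x => (u t x) ^ 3) h = v2 t h := by
    intro t h
    show iteratedDeriv 2 (v t) h = v2 t h
    simp only [iteratedDeriv_succ, iteratedDeriv_zero]
    rfl
  have e4 : ∀ t h : ℝ, iteratedDeriv 4 (fun x => (u t x) ^ 3) h = v4 t h := by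
    intro t h
    show iteratedDeriv 4 (v t) h = v4 t h
    simp only [iteratedDeriv_succ, iteratedDeriv_zero]
    rfl
  -- periodicity
  have hperv : ∀ t, Function.Periodic (v t) 1 := fun t x => by
    show (u t (x + 1)) ^ 3 = (u t x) ^ 3; rw [hper]
  have hperv1 := periodic_pdh hperv
  have hperv2 := periodic_pdh hperv1
  have hperv3 := periodic_pdh hperv2
  have hperw := periodic_pdt hperv
  have hperw1 := periodic_pdh hperw
  -- pointwise identities
  have hweq : ∀ t h : ℝ, w t h = 3 * (u t h) ^ 2 * ut t h := by
    intro t h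
    have h1 : HasDerivAt (fun s => u s h) (ut t h) t := hasDerivAt_pdt hu' t h
    have h2 := h1.pow 3
    have h3 : w t h = (3 : ℝ) * u t h ^ (3 - 1) * ut t h := h2.deriv
    simpa using h3
  have hkey : ∀ t h : ℝ, v4 t h * w t h = -3 * (ut t h) ^ 2 := by
    intro t h
    have h1 : ut t h = -(u t h) ^ 2 * v4 t h := by
      rw [show ut t h = deriv (fun s => u s h) t from rfl, hpde t h, e4]
    rw [hweq t h, h1]; ring
  -- the main derivative computation, for each t
  have hmain : ∀ t : ℝ,
      HasDerivAt (fun τ => (1 / 6) * ∫ h in (0:ℝ)..1, (iteratedDeriv 2 (fun x => (u τ x) ^ 3) h) ^ 2)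
        (-∫ h in (0:ℝ)..1, (deriv (fun s => u s h) t) ^ 2) t := by
    intro t
    have hfun : (fun τ => (1 / 6 : ℝ) * ∫ h in (0:ℝ)..1, (iteratedDeriv 2 (fun x => (u τ x) ^ 3) h) ^ 2)
        = fun τ => (1 / 6 : ℝ) * ∫ h in (0:ℝ)..1, (v2 τ h) ^ 2 := by
      funext τ
      congr 1
      exact intervalIntegral.integral_congr fun h _ => by rw [e2]
    rw [hfun]
    have hf2 : ContDiff ℝ ∞ ↿(fun τ h => (v2 τ h) ^ 2) := hv2.pow 2
    have hD := (hasDerivAt_intervalIntegral hf2 t).const_mul (1 / 6 : ℝ)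
    have hval : (1 / 6 : ℝ) * ∫ h in (0:ℝ)..1, pdt (fun τ h => (v2 τ h) ^ 2) t h
        = -∫ h in (0:ℝ)..1, (ut t h) ^ 2 := by
      have c1 : ∀ h : ℝ, pdt (fun τ x => (v2 τ x) ^ 2) t h = 2 * (v2 t h * w2 t h) := by
        intro h
        have h1 : HasDerivAt (fun s => v2 s h) (pdt v2 t h) t := hasDerivAt_pdt hv2 t h
        have h2 : deriv (fun s => (v2 s h) ^ 2) t = ((2:ℕ):ℝ) * v2 t h ^ (2 - 1) * pdt v2 t h :=
          (h1.pow 2).deriv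
        rw [show pdt (fun τ x => (v2 τ x) ^ 2) t h = deriv (fun s => (v2 s h) ^ 2) t from rfl, h2,
          show pdt v2 t h = w2 t h from congrFun (congrFun hcomm t) h]
        ring
      rw [intervalIntegral.integral_congr (g := fun h => 2 * (v2 t h * w2 t h)) fun h _ => c1 h,
        intervalIntegral.integral_const_mul]
      -- integration by parts, twice
      have ibp1 : ∫ h in (0:ℝ)..1, v2 t h * w2 t h = -∫ h in (0:ℝ)..1, v3 t h * w1 t h := by
        have := intervalIntegral.integral_mul_deriv_eq_deriv_mul
          (u := v2 t) (u' := v3 t) (v := w1 t) (v' := w2 t) (a := 0) (b := 1)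
          (fun x _ => hasDerivAt_pdh hv2 t x) (fun x _ => hasDerivAt_pdh hw1 t x)
          ((contSlice hv3 t).intervalIntegrable 0 1) ((contSlice hw2 t).intervalIntegrable 0 1)
        have b1 : v2 t 1 = v2 t 0 := by simpa using hperv2 t 0
        have b2 : w1 t 1 = w1 t 0 := by simpa using hperw1 t 0
        rw [this, b1, b2]; ring
      have ibp2 : ∫ h in (0:ℝ)..1, v3 t h * w1 t h = -∫ h in (0:ℝ)..1, v4 t h * w t h := by
        have := intervalIntegral.integral_mul_deriv_eq_deriv_mul
          (u := v3 t) (u' := v4 t) (v := w t) (v' := w1 t) (a := 0) (b := 1)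
          (fun x _ => hasDerivAt_pdh hv3 t x) (fun x _ => hasDerivAt_pdh hw t x)
          ((contSlice hv4 t).intervalIntegrable 0 1) ((contSlice hw1 t).intervalIntegrable 0 1)
        have b1 : v3 t 1 = v3 t 0 := by simpa using hperv3 t 0
        have b2 : w t 1 = w t 0 := by simpa using hperw t 0
        rw [this, b1, b2]; ring
      have ckey : ∫ h in (0:ℝ)..1, v4 t h * w t h = -3 * ∫ h in (0:ℝ)..1, (ut t h) ^ 2 := by
        rw [intervalIntegral.integral_congr (g := fun h => -3 * (ut t h) ^ 2) fun h _ => hkey t h,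
          intervalIntegral.integral_const_mul]
      rw [ibp1, ibp2, ckey]; ring
    rw [show (-∫ h in (0:ℝ)..1, (deriv (fun s => u s h) t) ^ 2) = -∫ h in (0:ℝ)..1, (ut t h) ^ 2 from rfl,
      ← hval]
    exact hD
  refine ⟨fun t => ⟨hmain t, ?_⟩, ?_⟩
  · exact neg_nonpos.mpr (intervalIntegral.integral_nonneg zero_le_one fun h _ => sq_nonneg _)
  · apply antitone_of_deriv_nonpos
    · exact fun t => (hmain t).differentiableAt
    · intro t
      rw [(hmain t).deriv]
      exact neg_nonpos.mpr (intervalIntegral.integral_nonneg zero_le_one fun h _ => sq_nonneg _)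
end

section
/- Let u : ℝ × ℝ → ℝ be a smooth (infinitely differentiable) function of (t,h), 1-periodic in h (u(t,h+1) = u(t,h) for all t,h), with u(t,h) > 0 everywhere, and satisfying the PDE ∂ₜu(t,h) = −u(t,h)² · ∂ₕ⁴(u(t,·)³)(h) for all t and h. Then the quantity ∫₀¹ 1/u(t,h) dh is conserved: for all t, ∫₀¹ 1/u(t,h) dh = ∫₀¹ 1/u(0,h) dh. -/
set_option maxHeartbeats 1000000

open intervalIntegral MeasureTheory Set

private lemma partial2_contDiff {F : ℝ × ℝ → ℝ} (hF : ContDiff ℝ (⊤ : ℕ∞) F) :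
    ContDiff ℝ (⊤ : ℕ∞) (fun p : ℝ × ℝ => deriv (fun x => F (p.1, x)) p.2) := by
  have key : ∀ p : ℝ × ℝ, deriv (fun x => F (p.1, x)) p.2 = fderiv ℝ F p ((0:ℝ), (1:ℝ)) := by
    intro p
    have h1 : HasDerivAt (fun x : ℝ => (p.1, x)) ((0:ℝ), (1:ℝ)) p.2 :=
      (hasDerivAt_const p.2 p.1).prodMk (hasDerivAt_id p.2)
    have h2 := ((hF.differentiable (by simp)) p).hasFDerivAt.comp_hasDerivAt p.2 h1
    exact h2.deriv
  simp only [key]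
  exact (hF.fderiv_right (by simp)).clm_apply contDiff_const

private lemma slice_contDiff {G : ℝ × ℝ → ℝ} (hG : ContDiff ℝ (⊤ : ℕ∞) G) (s : ℝ) :
    ContDiff ℝ (⊤ : ℕ∞) (fun x : ℝ => G (s, x)) :=
  hG.comp (contDiff_const.prodMk contDiff_id)

private lemma cont_slice1 {G : ℝ × ℝ → ℝ} (hG : Continuous G) (h : ℝ) :
    Continuous (fun s : ℝ => G (s, h)) := hG.comp (continuous_id.prodMk continuous_const)

private lemma cont_slice2 {G : ℝ × ℝ → ℝ} (hG : Continuous G) (s : ℝ) :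
    Continuous (fun x : ℝ => G (s, x)) := hG.comp (continuous_const.prodMk continuous_id)

private lemma cont_swap {G : ℝ × ℝ → ℝ} (hG : Continuous G) :
    Continuous (fun q : ℝ × ℝ => G (q.2, q.1)) := hG.comp continuous_swap

private lemma iteratedPartial_contDiff {F : ℝ × ℝ → ℝ} (hF : ContDiff ℝ (⊤ : ℕ∞) F) (n : ℕ) :
    ContDiff ℝ (⊤ : ℕ∞) (fun p : ℝ × ℝ => iteratedDeriv n (fun x => F (p.1, x)) p.2) := by
  induction n with
  | zero => simpa [iteratedDeriv_zero] using hF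
  | succ n ih =>
      simp only [iteratedDeriv_succ]
      exact partial2_contDiff ih

private lemma periodic_iteratedDeriv {f : ℝ → ℝ} (hf : Function.Periodic f 1) (n : ℕ) :
    Function.Periodic (iteratedDeriv n f) 1 := by
  have hfun : (fun y => f (y + 1)) = f := funext hf
  intro x
  have := congrFun (iteratedDeriv_comp_add_const n f 1) x
  rw [hfun] at this
  exact this.symm

/-- Along smooth positive 1-periodic solutions of `u_t = −u²(u³)_{hhhh}`, the quantity
`∫₀¹ 1/u(t,h) dh` is conserved in time. -/
theorem conservation_of_inverse_slope
    (u : ℝ → ℝ → ℝ)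
    (hu : ContDiff ℝ (⊤ : ℕ∞) (Function.uncurry u))
    (hper : ∀ t h : ℝ, u t (h + 1) = u t h)
    (hpos : ∀ t h : ℝ, 0 < u t h)
    (hpde : ∀ t h : ℝ, deriv (fun s => u s h) t
      = -(u t h) ^ 2 * iteratedDeriv 4 (fun x => (u t x) ^ 3) h) :
    ∀ t : ℝ, ∫ h in (0:ℝ)..1, 1 / u t h = ∫ h in (0:ℝ)..1, 1 / u 0 h := by
  intro t
  set g : ℝ → ℝ → ℝ := fun s h => iteratedDeriv 4 (fun x => (u s x) ^ 3) h with hg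
  -- joint smoothness / continuity of g
  have hF : ContDiff ℝ (⊤ : ℕ∞) (fun p : ℝ × ℝ => (Function.uncurry u p) ^ 3) := hu.pow 3
  have hGsmooth : ContDiff ℝ (⊤ : ℕ∞) (Function.uncurry g) := by
    have := iteratedPartial_contDiff hF 4
    exact this
  have hgc : Continuous (Function.uncurry g) := hGsmooth.continuous
  -- slice smoothness
  -- inner integral vanishes
  have hinner : ∀ s : ℝ, (∫ h in (0:ℝ)..1, g s h) = 0 := by
    intro s
    have hder : ∀ x ∈ uIcc (0:ℝ) 1,
        HasDerivAt (iteratedDeriv 3 (fun x => (u s x) ^ 3)) (g s x) x := by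
      intro x _
      have hd3 : ContDiff ℝ (⊤ : ℕ∞) (fun x : ℝ => iteratedDeriv 3 (fun y => (u s y) ^ 3) x) :=
        slice_contDiff (iteratedPartial_contDiff hF 3) s
      have hd : DifferentiableAt ℝ (iteratedDeriv 3 (fun y => (u s y) ^ 3)) x :=
        hd3.differentiable (by simp) x
      have e : g s x = deriv (iteratedDeriv 3 (fun y => (u s y) ^ 3)) x :=
        congrFun (iteratedDeriv_succ (n := 3)) x
      rw [e]
      exact hd.hasDerivAt
    have hint : IntervalIntegrable (g s) MeasureTheory.volume 0 1 :=
      (cont_slice2 hgc s).intervalIntegrable 0 1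
    rw [intervalIntegral.integral_eq_sub_of_hasDerivAt hder hint]
    have hperf : Function.Periodic (fun x => (u s x) ^ 3) 1 := by
      intro x; simp [hper]
    have := periodic_iteratedDeriv hperf 3 0
    simp only [zero_add] at this
    rw [this]; ring
  -- pointwise FTC in t
  have hstep1 : ∀ h : ℝ, 1 / u t h - 1 / u 0 h = ∫ s in (0:ℝ)..t, g s h := by
    intro h
    have hder : ∀ s ∈ uIcc (0:ℝ) t, HasDerivAt (fun s => 1 / u s h) (g s h) s := by
      intro s _
      have hdu : DifferentiableAt ℝ (fun s => u s h) s := by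
        have : DifferentiableAt ℝ (Function.uncurry u) (s, h) := (hu.differentiable (by simp)) _
        exact this.comp s ((differentiableAt_id (𝕜 := ℝ) (x := s)).prodMk (differentiableAt_const h))
      have h1 : HasDerivAt (fun s => u s h) (deriv (fun s => u s h) s) s := hdu.hasDerivAt
      have h2 : HasDerivAt (fun s => (u s h)⁻¹)
          (-(deriv (fun s => u s h) s) / (u s h) ^ 2) s := h1.inv (hpos s h).ne'
      have hne : u s h ≠ 0 := (hpos s h).ne'
      have h3 : -(deriv (fun s => u s h) s) / (u s h) ^ 2 = g s h := by
        rw [hpde s h]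
        simp only [hg]
        field_simp
      rw [h3] at h2
      simpa [one_div] using h2
    have hint : IntervalIntegrable (fun s => g s h) MeasureTheory.volume 0 t := by
      exact (cont_slice1 hgc h).intervalIntegrable 0 t
    rw [intervalIntegral.integral_eq_sub_of_hasDerivAt hder hint]
  -- Fubini swap for continuous functions on a rectangle
  have hswap : ∀ a b : ℝ, a ≤ b →
      (∫ h in (0:ℝ)..1, ∫ s in a..b, g s h) = ∫ s in a..b, ∫ h in (0:ℝ)..1, g s h := by
    intro a b hab
    have hint : Integrable (Function.uncurry fun h s => g s h)
        ((MeasureTheory.volume.restrict (Ioc (0:ℝ) 1)).prod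
          (MeasureTheory.volume.restrict (Ioc a b))) := by
      rw [Measure.prod_restrict]
      have hcont : Continuous (Function.uncurry fun h s => g s h) := cont_swap hgc
      have : IntegrableOn (Function.uncurry fun h s => g s h)
          (Icc (0:ℝ) 1 ×ˢ Icc a b) (MeasureTheory.volume.prod MeasureTheory.volume) :=
        hcont.continuousOn.integrableOn_compact (isCompact_Icc.prod isCompact_Icc)
      exact this.mono_set (Set.prod_mono Ioc_subset_Icc_self Ioc_subset_Icc_self)
    have := MeasureTheory.integral_integral_swap hint
    simpa [intervalIntegral.integral_of_le hab, intervalIntegral.integral_of_le (by norm_num : (0:ℝ) ≤ 1)]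
      using this
  have hswap' : (∫ h in (0:ℝ)..1, ∫ s in (0:ℝ)..t, g s h)
      = ∫ s in (0:ℝ)..t, ∫ h in (0:ℝ)..1, g s h := by
    rcases le_total 0 t with ht | ht
    · exact hswap 0 t ht
    · have := hswap t 0 ht
      calc (∫ h in (0:ℝ)..1, ∫ s in (0:ℝ)..t, g s h)
          = ∫ h in (0:ℝ)..1, -(∫ s in t..(0:ℝ), g s h) := by
            refine intervalIntegral.integral_congr fun h _ => ?_
            rw [intervalIntegral.integral_symm]
        _ = -(∫ h in (0:ℝ)..1, ∫ s in t..(0:ℝ), g s h) := by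
            rw [intervalIntegral.integral_neg]
        _ = -(∫ s in t..(0:ℝ), ∫ h in (0:ℝ)..1, g s h) := by rw [this]
        _ = ∫ s in (0:ℝ)..t, ∫ h in (0:ℝ)..1, g s h := by
            rw [intervalIntegral.integral_symm, neg_neg]
  -- integrability of 1/u slices
  have hiu : ∀ s : ℝ, IntervalIntegrable (fun h => 1 / u s h) MeasureTheory.volume 0 1 := by
    intro s
    have hc : Continuous fun h => u s h := hu.continuous.comp (continuous_const.prodMk continuous_id)
    exact ((continuous_const.div hc fun h => (hpos s h).ne')).intervalIntegrable 0 1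
  have key : (∫ h in (0:ℝ)..1, 1 / u t h) - (∫ h in (0:ℝ)..1, 1 / u 0 h) = 0 := by
    rw [← intervalIntegral.integral_sub (hiu t) (hiu 0)]
    calc (∫ h in (0:ℝ)..1, (1 / u t h - 1 / u 0 h))
        = ∫ h in (0:ℝ)..1, ∫ s in (0:ℝ)..t, g s h := by
          refine intervalIntegral.integral_congr fun h _ => hstep1 h
      _ = ∫ s in (0:ℝ)..t, ∫ h in (0:ℝ)..1, g s h := hswap'
      _ = ∫ s in (0:ℝ)..t, (0:ℝ) := by
          refine intervalIntegral.integral_congr fun s _ => hinner s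
      _ = 0 := by simp
  linarith
end

section
/- Let ε > 0 and let u : ℝ × ℝ → ℝ be a smooth (infinitely differentiable) function of (t,h), 1-periodic in h (u(t,h+1) = u(t,h) for all t,h), with u(t,h) > 0 everywhere, satisfying the regularized PDE ∂ₜu(t,h) = −(u(t,h)⁴/(ε + u(t,h)²)) · ∂ₕ⁴(u(t,·)³)(h) for all t and h. Then for every t, the function E(t) = (1/6)∫₀¹ (∂ₕ²(u(t,·)³)(h))² dh has derivative E'(t) = −∫₀¹ (u(t,h)⁶/(ε + u(t,h)²)) · (∂ₕ⁴(u(t,·)³)(h))² dh ≤ 0. -/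
open intervalIntegral Metric Set
set_option maxHeartbeats 1000000

open Function
open scoped ContDiff

section aux
variable {F : ℝ → ℝ → ℝ}

lemma my_slice_h (hF : ContDiff ℝ ∞ ↿F) (t : ℝ) : ContDiff ℝ ∞ (fun h => F t h) :=
  hF.comp (contDiff_const.prodMk contDiff_id)

lemma my_slice_t (hF : ContDiff ℝ ∞ ↿F) (h : ℝ) : ContDiff ℝ ∞ (fun t => F t h) :=
  hF.comp (contDiff_id.prodMk contDiff_const)

lemma my_pderivH (hF : ContDiff ℝ ∞ ↿F) :
    ContDiff ℝ ∞ (fun p : ℝ × ℝ => deriv (fun x => F p.1 x) p.2) := by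
  have h1 : ContDiff ℝ ∞ (Function.uncurry (fun (p : ℝ × ℝ) (y : ℝ) => F p.1 y)) := by
    exact hF.comp ((contDiff_fst.fst).prodMk contDiff_snd)
  have h2 : ContDiff ℝ ∞ (fun p : ℝ × ℝ => fderiv ℝ (fun x => F p.1 x) p.2) :=
    h1.fderiv contDiff_snd (by exact le_of_eq rfl)
  have h3 : ContDiff ℝ ∞ (fun p : ℝ × ℝ => fderiv ℝ (fun x => F p.1 x) p.2 (1:ℝ)) :=
    h2.clm_apply contDiff_const
  convert h3 using 2 with p
  rfl

lemma my_pderivT (hF : ContDiff ℝ ∞ ↿F) :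
    ContDiff ℝ ∞ (fun p : ℝ × ℝ => deriv (fun s => F s p.2) p.1) := by
  have h1 : ContDiff ℝ ∞ (Function.uncurry (fun (p : ℝ × ℝ) (s : ℝ) => F s p.2)) := by
    exact hF.comp (contDiff_snd.prodMk (contDiff_fst.snd))
  have h2 : ContDiff ℝ ∞ (fun p : ℝ × ℝ => fderiv ℝ (fun s => F s p.2) p.1) :=
    h1.fderiv contDiff_fst (by exact le_of_eq rfl)
  have h3 : ContDiff ℝ ∞ (fun p : ℝ × ℝ => fderiv ℝ (fun s => F s p.2) p.1 (1:ℝ)) :=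
    h2.clm_apply contDiff_const
  convert h3 using 2 with p
  rfl

lemma my_iterH (hF : ContDiff ℝ ∞ ↿F) (k : ℕ) :
    ContDiff ℝ ∞ (fun p : ℝ × ℝ => iteratedDeriv k (fun x => F p.1 x) p.2) := by
  induction k with
  | zero => simpa [iteratedDeriv_zero] using (show ContDiff ℝ ∞ (fun p : ℝ × ℝ => F p.1 p.2) from hF)
  | succ k ih =>
    have := my_pderivH (F := fun t h => iteratedDeriv k (fun x => F t x) h) ih
    simpa [iteratedDeriv_succ] using this

end aux

section swap
variable {F : ℝ → ℝ → ℝ}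

lemma my_swap (hF : ContDiff ℝ ∞ ↿F) (t h : ℝ) :
    deriv (fun s => deriv (fun x => F s x) h) t
      = deriv (fun x => deriv (fun s => F s x) t) h := by
  set G : ℝ × ℝ → ℝ := ↿F with hG
  set f' : ℝ × ℝ → (ℝ × ℝ →L[ℝ] ℝ) := fderiv ℝ G with hf'
  have hGsm : ContDiff ℝ ∞ G := hF
  have hG1 : ∀ p, HasFDerivAt G (f' p) p := fun p =>
    (hGsm.differentiable (by simp) p).hasFDerivAt
  have hf'sm : ContDiff ℝ ∞ f' := hGsm.fderiv_right (le_of_eq rfl)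
  set f'' : ℝ × ℝ →L[ℝ] ℝ × ℝ →L[ℝ] ℝ := fderiv ℝ f' (t, h) with hf''
  have hf''d : HasFDerivAt f' f'' (t, h) :=
    (hf'sm.differentiable (by simp) (t, h)).hasFDerivAt
  have hsym : ∀ v w : ℝ × ℝ, f'' v w = f'' w v :=
    second_derivative_symmetric hG1 hf''d
  -- partial derivative in h
  have hparH : ∀ a b : ℝ, HasDerivAt (fun x => F a x) (f' (a, b) (0, 1)) b := by
    intro a b
    have hcurve : HasDerivAt (fun x : ℝ => ((a, x) : ℝ × ℝ)) ((0 : ℝ), (1 : ℝ)) b :=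
      (hasDerivAt_const b a).prodMk (hasDerivAt_id b)
    exact (hG1 (a, b)).comp_hasDerivAt b hcurve
  have hparT : ∀ a b : ℝ, HasDerivAt (fun s => F s b) (f' (a, b) (1, 0)) a := by
    intro a b
    have hcurve : HasDerivAt (fun s : ℝ => ((s, b) : ℝ × ℝ)) ((1 : ℝ), (0 : ℝ)) a :=
      (hasDerivAt_id a).prodMk (hasDerivAt_const a b)
    exact (hG1 (a, b)).comp_hasDerivAt a hcurve
  -- LHS
  have hL : deriv (fun s => deriv (fun x => F s x) h) t = f'' (1, 0) (0, 1) := by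
    have e1 : (fun s => deriv (fun x => F s x) h) = fun s => f' (s, h) (0, 1) := by
      funext s; exact (hparH s h).deriv
    rw [e1]
    have eA : HasFDerivAt (fun L : ℝ × ℝ →L[ℝ] ℝ => L (0, 1))
        (ContinuousLinearMap.apply ℝ ℝ ((0 : ℝ), (1 : ℝ))) (f' (t, h)) :=
      (ContinuousLinearMap.apply ℝ ℝ ((0 : ℝ), (1 : ℝ))).hasFDerivAt
    have hA : HasFDerivAt (fun p : ℝ × ℝ => f' p (0, 1))
        ((ContinuousLinearMap.apply ℝ ℝ ((0 : ℝ), (1 : ℝ))).comp f'') (t, h) :=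
      eA.comp (t, h) hf''d
    have hcurve : HasDerivAt (fun s : ℝ => ((s, h) : ℝ × ℝ)) ((1 : ℝ), (0 : ℝ)) t :=
      (hasDerivAt_id t).prodMk (hasDerivAt_const t h)
    have := (hA.comp_hasDerivAt t hcurve)
    simpa [Function.comp_def] using this.deriv
  have hR : deriv (fun x => deriv (fun s => F s x) t) h = f'' (0, 1) (1, 0) := by
    have e1 : (fun x => deriv (fun s => F s x) t) = fun x => f' (t, x) (1, 0) := by
      funext x; exact (hparT t x).deriv
    rw [e1]
    have eA : HasFDerivAt (fun L : ℝ × ℝ →L[ℝ] ℝ => L (1, 0))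
        (ContinuousLinearMap.apply ℝ ℝ ((1 : ℝ), (0 : ℝ))) (f' (t, h)) :=
      (ContinuousLinearMap.apply ℝ ℝ ((1 : ℝ), (0 : ℝ))).hasFDerivAt
    have hA : HasFDerivAt (fun p : ℝ × ℝ => f' p (1, 0))
        ((ContinuousLinearMap.apply ℝ ℝ ((1 : ℝ), (0 : ℝ))).comp f'') (t, h) :=
      eA.comp (t, h) hf''d
    have hcurve : HasDerivAt (fun x : ℝ => ((t, x) : ℝ × ℝ)) ((0 : ℝ), (1 : ℝ)) h :=
      (hasDerivAt_const h t).prodMk (hasDerivAt_id h)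
    have := (hA.comp_hasDerivAt h hcurve)
    simpa [Function.comp_def] using this.deriv
  rw [hL, hR, hsym]
end swap

lemma my_comm {F : ℝ → ℝ → ℝ} (hF : ContDiff ℝ ∞ ↿F) (k : ℕ) (t h : ℝ) :
    deriv (fun s => iteratedDeriv k (fun x => F s x) h) t
      = iteratedDeriv k (fun x => deriv (fun s => F s x) t) h := by
  induction k generalizing h with
  | zero => simp [iteratedDeriv_zero]
  | succ k ih =>
    have hGsm : ContDiff ℝ ∞ (↿(fun s x => iteratedDeriv k (fun y => F s y) x)) :=
      my_iterH hF k
    have step := my_swap hGsm t h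
    have e1 : (fun s => iteratedDeriv (k+1) (fun x => F s x) h)
        = fun s => deriv (fun x => iteratedDeriv k (fun y => F s y) x) h := by
      funext s; rw [iteratedDeriv_succ]
    rw [e1, step]
    have e2 : (fun x => deriv (fun s => iteratedDeriv k (fun y => F s y) x) t)
        = fun x => iteratedDeriv k (fun y => deriv (fun s => F s y) t) x := by
      funext x; exact ih x
    rw [e2, ← iteratedDeriv_succ]
open intervalIntegral MeasureTheory

lemma my_periodic_deriv {f : ℝ → ℝ} (hf : ∀ x, f (x + 1) = f x) (x : ℝ) :
    deriv f (x + 1) = deriv f x := by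
  have hfun : (fun y => f (y + 1)) = f := funext hf
  have := deriv_comp_add_const f 1 x
  rw [hfun] at this
  exact this.symm

lemma my_ibp {f g : ℝ → ℝ} (hf : ContDiff ℝ ∞ f) (hg : ContDiff ℝ ∞ g)
    (hfp : ∀ x, f (x + 1) = f x) (hgp : ∀ x, g (x + 1) = g x) :
    ∫ x in (0:ℝ)..1, f x * deriv g x = - ∫ x in (0:ℝ)..1, deriv f x * g x := by
  have hdiff : (1:WithTop ℕ∞) ≤ ∞ := by exact_mod_cast le_top
  have hdf : ∀ x ∈ Set.uIcc (0:ℝ) 1, HasDerivAt f (deriv f x) x := fun x _ =>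
    ((hf.differentiable (by simp)) x).hasDerivAt
  have hdg : ∀ x ∈ Set.uIcc (0:ℝ) 1, HasDerivAt g (deriv g x) x := fun x _ =>
    ((hg.differentiable (by simp)) x).hasDerivAt
  have hif : IntervalIntegrable (deriv f) volume 0 1 :=
    (hf.continuous_deriv hdiff).intervalIntegrable 0 1
  have hig : IntervalIntegrable (deriv g) volume 0 1 :=
    (hg.continuous_deriv hdiff).intervalIntegrable 0 1
  have := integral_mul_deriv_eq_deriv_mul hdf hdg hif hig
  have hb : f 1 * g 1 - f 0 * g 0 = 0 := by
    have h1 : f 1 = f 0 := by simpa using hfp 0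
    have h2 : g 1 = g 0 := by simpa using hgp 0
    rw [h1, h2]; ring
  rw [this, hb]; ring

lemma my_ibp2 {f g : ℝ → ℝ} (hf : ContDiff ℝ ∞ f) (hg : ContDiff ℝ ∞ g)
    (hfp : ∀ x, f (x + 1) = f x) (hgp : ∀ x, g (x + 1) = g x) :
    ∫ x in (0:ℝ)..1, f x * deriv (deriv g) x
      = ∫ x in (0:ℝ)..1, deriv (deriv f) x * g x := by
  have hdiff : (1:WithTop ℕ∞) ≤ ∞ := by exact_mod_cast le_top
  have hdf : ContDiff ℝ ∞ (deriv f) := (contDiff_infty_iff_deriv.mp hf).2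
  have hdg : ContDiff ℝ ∞ (deriv g) := (contDiff_infty_iff_deriv.mp hg).2
  have h1 : ∫ x in (0:ℝ)..1, f x * deriv (deriv g) x
      = - ∫ x in (0:ℝ)..1, deriv f x * deriv g x :=
    my_ibp hf hdg hfp (my_periodic_deriv hgp)
  have h2 : ∫ x in (0:ℝ)..1, deriv (deriv f) x * g x
      = - ∫ x in (0:ℝ)..1, deriv f x * deriv g x := by
    have := my_ibp hg hdf hgp (my_periodic_deriv hfp)
    have hcomm : ∫ x in (0:ℝ)..1, g x * deriv (deriv f) x
        = ∫ x in (0:ℝ)..1, deriv (deriv f) x * g x := by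
      apply intervalIntegral.integral_congr; intro x _; ring
    have hcomm2 : ∫ x in (0:ℝ)..1, deriv g x * deriv f x
        = ∫ x in (0:ℝ)..1, deriv f x * deriv g x := by
      apply intervalIntegral.integral_congr; intro x _; ring
    rw [← hcomm, this, hcomm2]
  rw [h1, ← h2]
lemma my_periodic_iter {f : ℝ → ℝ} (hf : ∀ x, f (x + 1) = f x) (k : ℕ) :
    ∀ x, iteratedDeriv k f (x + 1) = iteratedDeriv k f x := by
  induction k with
  | zero => simpa using hf
  | succ k ih =>
    intro x
    rw [iteratedDeriv_succ]
    exact my_periodic_deriv ih x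


/-- Along smooth positive 1-periodic solutions of the regularized PDE
`u_t = −(u⁴/(ε+u²))(u³)_{hhhh}`, the energy dissipation rate
`E(t) = (1/6)∫₀¹ ((u³)_{hh})² dh` satisfies
`E'(t) = −∫₀¹ (u⁶/(ε+u²))((u³)_{hhhh})² dh ≤ 0`. -/
theorem regularized_energy_dissipation
    (ε : ℝ) (hε : 0 < ε)
    (u : ℝ → ℝ → ℝ)
    (hu : ContDiff ℝ (⊤ : ℕ∞) (Function.uncurry u))
    (hper : ∀ t h : ℝ, u t (h + 1) = u t h)
    (hpos : ∀ t h : ℝ, 0 < u t h)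
    (hpde : ∀ t h : ℝ, deriv (fun s => u s h) t
      = -((u t h) ^ 4 / (ε + (u t h) ^ 2)) * iteratedDeriv 4 (fun x => (u t x) ^ 3) h) :
    ∀ t : ℝ,
      HasDerivAt
        (fun τ => (1 / 6) * ∫ h in (0:ℝ)..1, (iteratedDeriv 2 (fun x => (u τ x) ^ 3) h) ^ 2)
        (-∫ h in (0:ℝ)..1,
          ((u t h) ^ 6 / (ε + (u t h) ^ 2)) * (iteratedDeriv 4 (fun x => (u t x) ^ 3) h) ^ 2) t
      ∧ (-∫ h in (0:ℝ)..1,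
          ((u t h) ^ 6 / (ε + (u t h) ^ 2)) * (iteratedDeriv 4 (fun x => (u t x) ^ 3) h) ^ 2) ≤ 0 := by
  intro t
  have hone : (1 : WithTop ℕ∞) ≤ ∞ := by exact_mod_cast le_top
  have hu' : ContDiff ℝ ∞ ↿u := hu.of_le (by simp)
  -- w t x = u t x ^ 3
  have hw : ContDiff ℝ ∞ (↿(fun s x => (u s x) ^ 3)) := hu'.pow 3
  -- Q : second h-derivative of u^3
  set Q : ℝ → ℝ → ℝ := fun τ h => iteratedDeriv 2 (fun x => (u τ x) ^ 3) h with hQdef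
  set R : ℝ → ℝ → ℝ := fun τ h => deriv (fun s => Q s h) τ with hRdef
  have hQ : ContDiff ℝ ∞ (fun p : ℝ × ℝ => Q p.1 p.2) := my_iterH hw 2
  have hR : ContDiff ℝ ∞ (fun p : ℝ × ℝ => R p.1 p.2) := my_pderivT hQ
  have hQc : Continuous (fun p : ℝ × ℝ => Q p.1 p.2) := hQ.continuous
  have hRc : Continuous (fun p : ℝ × ℝ => R p.1 p.2) := hR.continuous
  -- derivative under the integral sign
  have hF'c : Continuous (fun p : ℝ × ℝ => 2 * Q p.1 p.2 * R p.1 p.2) :=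
    (continuous_const.mul hQc).mul hRc
  obtain ⟨C, hC⟩ := (isCompact_Icc.prod isCompact_Icc :
      IsCompact ((Icc (t-1) (t+1)) ×ˢ (Icc (0:ℝ) 1))).exists_bound_of_continuousOn
      hF'c.continuousOn
  have key : HasDerivAt (fun τ => ∫ h in (0:ℝ)..1, (Q τ h) ^ 2)
      (∫ h in (0:ℝ)..1, 2 * Q t h * R t h) t := by
    have hF_meas : ∀ᶠ x in nhds t,
        MeasureTheory.AEStronglyMeasurable (fun h => (Q x h) ^ 2)
          (MeasureTheory.volume.restrict (Set.uIoc (0:ℝ) 1)) := by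
      refine Filter.Eventually.of_forall (fun x => ?_)
      exact ((hQc.comp (continuous_const.prodMk continuous_id)).pow 2).aestronglyMeasurable
    have hF_int : IntervalIntegrable (fun h => (Q t h) ^ 2) MeasureTheory.volume 0 1 :=
      ((hQc.comp (continuous_const.prodMk continuous_id)).pow 2).intervalIntegrable 0 1
    have hF'_meas : MeasureTheory.AEStronglyMeasurable (fun h => 2 * Q t h * R t h)
        (MeasureTheory.volume.restrict (Set.uIoc (0:ℝ) 1)) :=
      (hF'c.comp (continuous_const.prodMk continuous_id)).aestronglyMeasurable
    have h_bound : ∀ᵐ h ∂MeasureTheory.volume, h ∈ Set.uIoc (0:ℝ) 1 →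
        ∀ x ∈ ball t 1, ‖2 * Q x h * R x h‖ ≤ C := by
      refine Filter.Eventually.of_forall (fun h hh x hx => ?_)
      refine hC (x, h) ?_
      constructor
      · have := abs_lt.mp (by simpa [Real.dist_eq] using mem_ball.mp hx)
        exact ⟨by linarith [this.1], by linarith [this.2]⟩
      · rw [Set.uIoc_of_le (by norm_num : (0:ℝ) ≤ 1)] at hh
        exact ⟨le_of_lt hh.1, hh.2⟩
    have bound_int : IntervalIntegrable (fun _ : ℝ => C) MeasureTheory.volume 0 1 :=
      intervalIntegrable_const
    have h_diff : ∀ᵐ h ∂MeasureTheory.volume, h ∈ Set.uIoc (0:ℝ) 1 →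
        ∀ x ∈ ball t 1, HasDerivAt (fun τ => (Q τ h) ^ 2) (2 * Q x h * R x h) x := by
      refine Filter.Eventually.of_forall (fun h _ x _ => ?_)
      have hQd : HasDerivAt (fun τ => Q τ h) (R x h) x := by
        have hdiff : DifferentiableAt ℝ (fun τ => Q τ h) x :=
          ((my_slice_t hQ h).differentiable (by simp)) x
        simpa [hRdef] using hdiff.hasDerivAt
      have := hQd.fun_pow 2
      refine this.congr_deriv ?_
      push_cast
      ring
    exact (intervalIntegral.hasDerivAt_integral_of_dominated_loc_of_deriv_le
      (𝕜 := ℝ) (μ := MeasureTheory.volume) (F := fun τ h => (Q τ h) ^ 2)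
      (F' := fun τ h => 2 * Q τ h * R τ h) (x₀ := t) (a := 0) (b := 1)
      (bound := fun _ => C) (s := ball t 1)
      (ball_mem_nhds t (by norm_num : (0:ℝ) < 1)) hF_meas hF_int hF'_meas h_bound bound_int h_diff).2
  have hE : HasDerivAt (fun τ => (1/6 : ℝ) * ∫ h in (0:ℝ)..1, (Q τ h) ^ 2)
      ((1/6 : ℝ) * ∫ h in (0:ℝ)..1, 2 * Q t h * R t h) t := key.const_mul (1/6 : ℝ)
  -- now identify the derivative with the claimed expression
  set W : ℝ → ℝ := fun h => iteratedDeriv 4 (fun x => (u t x) ^ 3) h with hWdef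
  set z : ℝ → ℝ := fun x => deriv (fun s => (u s x) ^ 3) t with hzdef
  have hRz : ∀ h, R t h = iteratedDeriv 2 z h := fun h => my_comm hw 2 t h
  have hεu : ∀ x, ε + (u t x) ^ 2 ≠ 0 := fun x => by positivity
  have hz : ∀ x, z x = -3 * ((u t x) ^ 6 / (ε + (u t x) ^ 2)) * W x := by
    intro x
    have hud : HasDerivAt (fun s => u s x) (deriv (fun s => u s x) t) t :=
      (((my_slice_t hu' x).differentiable (by simp)) t).hasDerivAt
    have h3 := hud.fun_pow 3
    have hzx : z x = 3 * (u t x) ^ 2 * deriv (fun s => u s x) t := by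
      simpa [hzdef] using h3.deriv
    rw [hzx, hpde t x]
    ring
  -- periodicity facts
  have hQper : ∀ x, Q t (x + 1) = Q t x := fun x =>
    my_periodic_iter (f := fun y => (u t y) ^ 3) (fun y => by beta_reduce; rw [hper]) 2 x
  have hzper : ∀ x, z (x + 1) = z x := by
    intro x
    simp only [hzdef]
    congr 1
    funext s
    rw [hper]
  have hQt : ContDiff ℝ ∞ (fun h => Q t h) := my_slice_h hQ t
  have hzsm : ContDiff ℝ ∞ z :=
    (my_pderivT hw).comp (contDiff_const.prodMk contDiff_id)
  have iter2 : ∀ f : ℝ → ℝ, iteratedDeriv 2 f = deriv (deriv f) := by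
    intro f
    rw [show (2:ℕ) = 1 + 1 from rfl, iteratedDeriv_succ, iteratedDeriv_one]
  have iter4 : ∀ h, deriv (deriv (fun x => Q t x)) h = W h := by
    intro h
    show deriv (deriv (iteratedDeriv 2 (fun x => (u t x) ^ 3))) h
      = iteratedDeriv 4 (fun x => (u t x) ^ 3) h
    rw [← iteratedDeriv_succ, ← iteratedDeriv_succ]

  have e1 : ∫ h in (0:ℝ)..1, 2 * Q t h * R t h
      = 2 * ∫ h in (0:ℝ)..1, Q t h * deriv (deriv z) h := by
    rw [← intervalIntegral.integral_const_mul]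
    apply intervalIntegral.integral_congr
    intro h _
    simp only [hRz, iter2]
    ring
  have e2 : ∫ h in (0:ℝ)..1, Q t h * deriv (deriv z) h
      = ∫ h in (0:ℝ)..1, deriv (deriv (fun x => Q t x)) h * z h :=
    my_ibp2 hQt hzsm hQper hzper
  have e3 : ∫ h in (0:ℝ)..1, deriv (deriv (fun x => Q t x)) h * z h
      = -3 * ∫ h in (0:ℝ)..1, (u t h) ^ 6 / (ε + (u t h) ^ 2) * (W h) ^ 2 := by
    rw [← intervalIntegral.integral_const_mul]
    apply intervalIntegral.integral_congr
    intro h _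
    simp only [iter4, hz]
    ring
  have hfinal : (1/6 : ℝ) * ∫ h in (0:ℝ)..1, 2 * Q t h * R t h
      = -∫ h in (0:ℝ)..1, (u t h) ^ 6 / (ε + (u t h) ^ 2) * (W h) ^ 2 := by
    rw [e1, e2, e3]
    ring
  have hnn : 0 ≤ ∫ h in (0:ℝ)..1, (u t h) ^ 6 / (ε + (u t h) ^ 2) * (W h) ^ 2 :=
    intervalIntegral.integral_nonneg (by norm_num) (fun x _ => by positivity)
  constructor
  · rw [hfinal] at hE
    exact hE
  · exact neg_nonpos.mpr hnn
end

section
/- Let f : ℝ → ℝ be continuous and 1-periodic with f(h) > 0 for all h, and suppose f attains its minimum value m over a period at a point h⋆, i.e. m = f(h⋆) ≤ f(h) for all h. Let K > 0, C > 0, ε > 0 be constants such that: f(h) ≤ m + K·|h − h⋆|^{3/2} whenever |h − h⋆| ≤ 1; ∫₀¹ ε/f(h) dh ≤ C; and (4/(9K²C²))·ε² ≤ 1. Then m ≥ 4ε³/(27 K² C³). -/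
/-! Near `h⋆` the function stays below `m + K s³` on an interval of length `s²`,
so `ε / f ≥ ε / (m + K s³)` there and `C ≥ ∫₀¹ ε / f ≥ s² ε / (m + K s³)`; periodicity is what
lets `[h⋆, h⋆ + s²]` sit inside a period. Hence `m ≥ s² ε / C - K s³`, and the choice
`s = 2ε / (3KC)` maximises the right-hand side, giving `4ε³ / (27K²C³)`. -/

open intervalIntegral Set MeasureTheory

theorem Function.Periodic.intervalIntegral_le_of_nonneg {g : ℝ → ℝ} {T a L : ℝ}
    (hper : Function.Periodic g T) (hnn : ∀ x, 0 ≤ g x)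
    (hint : IntervalIntegrable g volume a (a + T)) (hL : 0 ≤ L) (hLT : L ≤ T) :
    ∫ x in a..a + L, g x ≤ ∫ x in (0:ℝ)..T, g x :=
  calc ∫ x in a..a + L, g x
      ≤ ∫ x in a..a + T, g x :=
        integral_mono_interval le_rfl (by linarith) (by linarith)
          (Filter.Eventually.of_forall hnn) hint
    _ = ∫ x in (0:ℝ)..T, g x := by simpa using hper.intervalIntegral_add_eq a 0

theorem intervalIntegral.mul_le_integral_of_forall_le {g : ℝ → ℝ} {a b c : ℝ} (hab : a ≤ b)
    (hc : ∀ x ∈ Icc a b, c ≤ g x) (hint : IntervalIntegrable g volume a b) :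
    (b - a) * c ≤ ∫ x in a..b, g x := by
  simpa using integral_mono_on hab intervalIntegrable_const hint hc

theorem quantitative_positivity_lower_bound_general
    (f : ℝ → ℝ) (hf : Continuous f) (hper : ∀ h : ℝ, f (h + 1) = f h)
    (hpos : ∀ h : ℝ, 0 < f h)
    (hstar m : ℝ)
    (K C ε : ℝ) (hK : 0 < K) (hC : 0 < C) (hε : 0 < ε)
    (hupper : ∀ h : ℝ, |h - hstar| ≤ 1 → f h ≤ m + K * |h - hstar| ^ ((3:ℝ) / 2))
    (hint : ∫ h in (0:ℝ)..1, ε / f h ≤ C)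
    (hsmall : (4 / (9 * K ^ 2 * C ^ 2)) * ε ^ 2 ≤ 1) :
    m ≥ 4 * ε ^ 3 / (27 * K ^ 2 * C ^ 3) := by
  set s := 2 * ε / (3 * K * C)
  have hs : 0 < s := by positivity
  have hs1 : s ^ 2 ≤ 1 := by convert hsmall using 1; simp only [s]; field_simp; ring
  have hbound : ∀ x ∈ Icc hstar (hstar + s ^ 2), f x ≤ m + K * s ^ 3 := by
    rintro x ⟨hx₁, hx₂⟩
    have hdist : |x - hstar| ≤ s ^ 2 := by rw [abs_of_nonneg (by linarith)]; linarith
    have hpow : |x - hstar| ^ ((3:ℝ) / 2) ≤ s ^ 3 :=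
      calc |x - hstar| ^ ((3:ℝ) / 2) ≤ (s ^ 2) ^ ((3:ℝ) / 2) := by gcongr
        _ = s ^ 3 := by rw [← Real.rpow_natCast, ← Real.rpow_mul hs.le]; norm_num
    nlinarith [hupper x (hdist.trans hs1)]
  have hlen : hstar ≤ hstar + s ^ 2 := le_add_of_nonneg_right (sq_nonneg s)
  have hM : 0 < m + K * s ^ 3 := (hpos hstar).trans_le (hbound hstar ⟨le_rfl, hlen⟩)
  have hgc : Continuous fun h => ε / f h := continuous_const.div hf fun h => (hpos h).ne'
  have hgper : Function.Periodic (fun h => ε / f h) 1 := fun h => by simp only [hper]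
  have key : s ^ 2 * (ε / (m + K * s ^ 3)) ≤ C :=
    calc s ^ 2 * (ε / (m + K * s ^ 3))
        ≤ ∫ h in hstar..hstar + s ^ 2, ε / f h := by
          simpa using mul_le_integral_of_forall_le hlen
            (fun x hx => div_le_div_of_nonneg_left hε.le (hpos x) (hbound x hx))
            (hgc.intervalIntegrable _ _)
      _ ≤ ∫ h in (0:ℝ)..1, ε / f h :=
        hgper.intervalIntegral_le_of_nonneg (fun h => (div_pos hε (hpos h)).le)
          (hgc.intervalIntegrable _ _) (by positivity) hs1
      _ ≤ C := hint
  have hopt : s ^ 2 * ε / C - K * s ^ 3 = 4 * ε ^ 3 / (27 * K ^ 2 * C ^ 3) := by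
    simp only [s]; field_simp; ring
  rw [mul_div_assoc', div_le_iff₀ hM] at key
  rw [ge_iff_le, ← hopt, sub_le_iff_le_add, div_le_iff₀ hC]
  linarith

/-- Quantitative positivity lemma: if `f` is continuous, 1-periodic and positive with
minimum `m = f(h⋆)`, `f(h) ≤ m + K|h − h⋆|^{3/2}` near `h⋆`, `∫₀¹ ε/f ≤ C`, and
`(4/(9K²C²))ε² ≤ 1`, then `m ≥ 4ε³/(27K²C³)`. -/
theorem quantitative_positivity_lower_bound
    (f : ℝ → ℝ) (hf : Continuous f) (hper : ∀ h : ℝ, f (h + 1) = f h)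
    (hpos : ∀ h : ℝ, 0 < f h)
    (hstar m : ℝ) (hm : m = f hstar) (hmin : ∀ h : ℝ, m ≤ f h)
    (K C ε : ℝ) (hK : 0 < K) (hC : 0 < C) (hε : 0 < ε)
    (hupper : ∀ h : ℝ, |h - hstar| ≤ 1 → f h ≤ m + K * |h - hstar| ^ ((3:ℝ) / 2))
    (hint : ∫ h in (0:ℝ)..1, ε / f h ≤ C)
    (hsmall : (4 / (9 * K ^ 2 * C ^ 2)) * ε ^ 2 ≤ 1) :
    m ≥ 4 * ε ^ 3 / (27 * K ^ 2 * C ^ 3) :=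
  quantitative_positivity_lower_bound_general f hf hper hpos hstar m K C ε hK hC hε hupper hint
    hsmall
end

section
/- Let u : ℝ → ℝ be continuous, 1-periodic (u(h+1) = u(h) for all h), with u(h) ≥ 0 for all h, and such that h ↦ u(h)³ is twice continuously differentiable. Then for every h ∈ [0,1], u(h)³ ≤ (∫₀¹ u(s)² ds)^{3/2} + (2/3)·(∫₀¹ ((u³)''(s))² ds)^{1/2}. -/
/-!
Let `c ∈ [0, 1]` be a minimum point of the periodic function `u`. Then `u(c)² ≤ ∫₀¹ u²`,
which bounds `u(c)³` by the first term. Since `(u³)'(c) = 0`, Taylor's formula with integral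
remainder, `u³(h) - u³(c) = ∫_c^h (h - s) (u³)''(s) ds`, and the Cauchy–Schwarz inequality give
`(u³(h) - u³(c))² ≤ |h - c|³ / 3 · ∫₀¹ ((u³)'')²`; as `|h - c| ≤ 1`, the constant `2 / 3` only
needs `1 / 3 ≤ (2 / 3)²`.
-/

open intervalIntegral MeasureTheory Set

theorem Function.Periodic.exists_mem_Icc_forall_le {α : Type*} [TopologicalSpace α]
    [LinearOrder α] [ClosedIicTopology α] {f : ℝ → α} {T : ℝ} (hp : Function.Periodic f T)
    (hT : 0 < T) (hf : Continuous f) : ∃ c ∈ Icc 0 T, ∀ x, f c ≤ f x := by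
  obtain ⟨c, hc, hmin⟩ := isCompact_Icc.exists_isMinOn (nonempty_Icc.2 hT.le) hf.continuousOn
  refine ⟨c, hc, fun x => ?_⟩
  obtain ⟨y, hy, hxy⟩ := hp.exists_mem_Ico₀ hT x
  exact hxy ▸ hmin (Ico_subset_Icc_self hy)

theorem intervalIntegral.sq_integral_mul_le {f w : ℝ → ℝ} (hf : Continuous f)
    (hw : Continuous w) (a b : ℝ) :
    (∫ t in a..b, f t * w t) ^ 2 ≤ (∫ t in a..b, f t ^ 2) * ∫ t in a..b, w t ^ 2 := by
  wlog hab : a ≤ b generalizing a b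
  · simpa only [integral_symm b a, neg_sq, neg_mul_neg] using this b a (le_of_not_ge hab)
  have hquad : ∀ x : ℝ, 0 ≤ (∫ t in a..b, f t ^ 2) * (x * x)
      + 2 * (∫ t in a..b, f t * w t) * x + ∫ t in a..b, w t ^ 2 := by
    intro x
    have hexp : ∫ t in a..b, (x * f t + w t) ^ 2 = (∫ t in a..b, f t ^ 2) * (x * x)
        + 2 * (∫ t in a..b, f t * w t) * x + ∫ t in a..b, w t ^ 2 := by
      have hint : ∀ φ : ℝ → ℝ, Continuous φ → IntervalIntegrable φ volume a b :=
        fun φ hφ => hφ.intervalIntegrable a b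
      have hpt : (fun t => (x * f t + w t) ^ 2)
          = fun t => x ^ 2 * f t ^ 2 + 2 * x * (f t * w t) + w t ^ 2 := by
        ext t; ring
      rw [hpt, integral_add (hint _ (by fun_prop)) (hint _ (by fun_prop)),
        integral_add (hint _ (by fun_prop)) (hint _ (by fun_prop)), integral_const_mul,
        integral_const_mul]
      ring
    exact hexp ▸ integral_nonneg hab fun t _ => sq_nonneg _
  have hdiscrim := discrim_le_zero hquad
  rw [discrim] at hdiscrim
  nlinarith

theorem integral_sub_mul_iteratedDeriv_two_eq {g : ℝ → ℝ} (hg : ContDiff ℝ 2 g) (c h : ℝ) :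
    ∫ s in c..h, (h - s) * iteratedDeriv 2 g s = g h - g c - (h - c) * deriv g c := by
  have hg' : ∀ x, HasDerivAt g (deriv g x) x :=
    fun x => (hg.differentiable (by norm_num) x).hasDerivAt
  have hg'' : ∀ x, HasDerivAt (deriv g) (iteratedDeriv 2 g x) x := by
    have hd : Differentiable ℝ (deriv g) :=
      iteratedDeriv_one (f := g) ▸ hg.differentiable_iteratedDeriv 1 (by norm_num)
    rw [iteratedDeriv_succ, iteratedDeriv_one]
    exact fun x => (hd x).hasDerivAt
  rw [integral_mul_deriv_eq_deriv_mul (u := fun s => h - s) (u' := fun _ => -1)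
    (fun x _ => (hasDerivAt_id' x).const_sub h) (fun x _ => hg'' x) intervalIntegrable_const
    ((hg.continuous_iteratedDeriv 2 le_rfl).intervalIntegrable c h)]
  simp only [neg_one_mul, intervalIntegral.integral_neg, sub_self, zero_mul, sub_neg_eq_add]
  rw [integral_deriv_eq_sub (fun x _ => (hg' x).differentiableAt)
    ((hg.continuous_deriv (by norm_num)).intervalIntegrable c h)]
  ring

theorem ContDiff.sq_sub_le_of_deriv_eq_zero {g : ℝ → ℝ} (hg : ContDiff ℝ 2 g) {a b c h : ℝ}
    (hc : deriv g c = 0) (hcI : c ∈ Icc a b) (hhI : h ∈ Icc a b) :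
    (g h - g c) ^ 2 ≤ |h - c| ^ 3 / 3 * ∫ s in a..b, iteratedDeriv 2 g s ^ 2 := by
  have hcont : Continuous (iteratedDeriv 2 g) := hg.continuous_iteratedDeriv 2 le_rfl
  have hmoment : ∫ s in c..h, (h - s) ^ 2 = (h - c) ^ 3 / 3 := by
    rw [integral_comp_sub_left (fun s => s ^ 2), integral_pow]
    ring
  have hcs := sq_integral_mul_le (f := fun s => h - s) (by fun_prop) hcont c h
  rw [integral_sub_mul_iteratedDeriv_two_eq hg, hc, mul_zero, sub_zero, hmoment] at hcs
  set I := ∫ s in c..h, iteratedDeriv 2 g s ^ 2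
  have hI : |I| ≤ ∫ s in a..b, iteratedDeriv 2 g s ^ 2 := by
    refine (abs_integral_mono_interval (uIoc_subset_uIoc_of_uIcc_subset_uIcc
      ((uIcc_subset_Icc hcI hhI).trans Icc_subset_uIcc))
      (Filter.Eventually.of_forall fun _ => sq_nonneg _)
      ((hcont.pow 2).intervalIntegrable a b)).trans_eq (abs_of_nonneg ?_)
    exact integral_nonneg (hcI.1.trans hcI.2) fun _ _ => sq_nonneg _
  calc (g h - g c) ^ 2 ≤ (h - c) ^ 3 / 3 * I := hcs
    _ = |(h - c) ^ 3 / 3 * I| := (abs_of_nonneg ((sq_nonneg _).trans hcs)).symm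
    _ = |h - c| ^ 3 / 3 * |I| := by simp [abs_mul, abs_div, abs_pow]
    _ ≤ |h - c| ^ 3 / 3 * ∫ s in a..b, iteratedDeriv 2 g s ^ 2 := by gcongr

theorem pow_three_le_rpow_of_sq_le {x y : ℝ} (hx : 0 ≤ x) (h : x ^ 2 ≤ y) :
    x ^ 3 ≤ y ^ ((3 : ℝ) / 2) :=
  calc x ^ 3 = (x ^ 2) ^ ((3 : ℝ) / 2) := by
        rw [← Real.rpow_natCast, ← Real.rpow_natCast, ← Real.rpow_mul hx]; norm_num
    _ ≤ y ^ ((3 : ℝ) / 2) := Real.rpow_le_rpow (sq_nonneg x) h (by norm_num)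

/-- Uniform upper bound: for a continuous, nonnegative, 1-periodic `u` with `u³` twice
continuously differentiable, one has for every `h ∈ [0,1]`:
`u(h)³ ≤ (∫₀¹ u²)^{3/2} + (2/3)·‖(u³)''‖_{L²([0,1])}`. -/
theorem uniform_upper_bound_cube
    (u : ℝ → ℝ) (hu : Continuous u) (hper : ∀ h : ℝ, u (h + 1) = u h)
    (hnn : ∀ h : ℝ, 0 ≤ u h)
    (hcd : ContDiff ℝ 2 (fun x => (u x) ^ 3)) :
    ∀ h ∈ Set.Icc (0:ℝ) 1,
      (u h) ^ 3
        ≤ (∫ s in (0:ℝ)..1, (u s) ^ 2) ^ ((3:ℝ) / 2)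
          + (2 / 3) * Real.sqrt (∫ s in (0:ℝ)..1, (iteratedDeriv 2 (fun x => (u x) ^ 3) s) ^ 2) := by
  intro h hh
  set g : ℝ → ℝ := fun x => u x ^ 3
  set E := ∫ s in (0:ℝ)..1, iteratedDeriv 2 g s ^ 2
  obtain ⟨c, hc, hmin⟩ := Function.Periodic.exists_mem_Icc_forall_le hper one_pos hu
  have hgmin : IsLocalMin g c :=
    Filter.Eventually.of_forall fun x => pow_le_pow_left₀ (hnn c) (hmin x) 3
  have hmass : u c ^ 2 ≤ ∫ s in (0:ℝ)..1, u s ^ 2 := by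
    simpa using integral_mono_on (μ := volume) zero_le_one
      (continuous_const.intervalIntegrable 0 1) ((hu.pow 2).intervalIntegrable 0 1)
      fun s _ => pow_le_pow_left₀ (hnn c) (hmin s) 2
  have hosc : g h - g c ≤ 2 / 3 * √E := by
    have hE : 0 ≤ E := integral_nonneg zero_le_one fun _ _ => sq_nonneg _
    have hdist : |h - c| ^ 3 ≤ 1 := pow_le_one₀ (abs_nonneg _)
      (abs_sub_le_iff.2 ⟨by linarith [hh.2, hc.1], by linarith [hh.1, hc.2]⟩)
    refine le_of_sq_le_sq ?_ (by positivity)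
    calc (g h - g c) ^ 2 ≤ |h - c| ^ 3 / 3 * E :=
          hcd.sq_sub_le_of_deriv_eq_zero hgmin.deriv_eq_zero hc hh
      _ ≤ (2 / 3 * √E) ^ 2 := by rw [mul_pow, Real.sq_sqrt hE]; nlinarith
  calc g h = g c + (g h - g c) := by ring
    _ ≤ _ := add_le_add (pow_three_le_rpow_of_sq_le (hnn c) hmass) hosc
end
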